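/- arXiv:1109.6812 — 4 statements merged into one kernel-verified Lean document; each statement's English description precedes it below -/
import Mathlib

section
/- Let d ≥ 1 and α ∈ (0,2). Let k : ℝ^d × ℝ^d → [0,∞) be a measurable symmetric kernel with k(x,y) ≤ U(x−y) for a.e. x, y, where U : ℝ^d → [0,∞) is a measurable even function satisfying ∫_{B_r} |z|² U(z) dz ≤ C₁ r^{2−α} for ALL r > 0. Then there exists a constant c = c(α, d, C₁) such that for every u ∈ L²(ℝ^d), E^k_{ℝ^d}(u,u) ≤ c E^α_{ℝ^d}(u,u). -/
open MeasureTheory Metric Set Filter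
open scoped ENNReal RealInnerProductSpace SchwartzMap

noncomputable section

/-- `d`-dimensional Euclidean space. -/
abbrev Xd (d : ℕ) := EuclideanSpace ℝ (Fin d)

/-- The energy form `E^k_D(u,u) = ∫_D ∫_D (u(y)-u(x))² k(x,y) dx dy`, valued in `[0,∞]`. -/
noncomputable def energyK (d : ℕ) (D : Set (Xd d)) (k : Xd d → Xd d → ℝ) (u : Xd d → ℝ) : ℝ≥0∞ :=
  ∫⁻ x in D, ∫⁻ y in D, ENNReal.ofReal ((u y - u x) ^ 2 * k x y)

/-- The energy form for a translation-invariant kernel `f`, i.e. kernel `(x,y) ↦ f (x-y)`. -/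
noncomputable def energyT (d : ℕ) (D : Set (Xd d)) (f : Xd d → ℝ) (u : Xd d → ℝ) : ℝ≥0∞ :=
  ∫⁻ x in D, ∫⁻ y in D, ENNReal.ofReal ((u y - u x) ^ 2 * f (x - y))

/-- The fractional energy form
`E^α_D(u,u) = α(2-α) ∫_D ∫_D (u(y)-u(x))² |x-y|^{-d-α} dx dy`. -/
noncomputable def energyA (d : ℕ) (α : ℝ) (D : Set (Xd d)) (u : Xd d → ℝ) : ℝ≥0∞ :=
  ENNReal.ofReal (α * (2 - α)) *
    ∫⁻ x in D, ∫⁻ y in D, ENNReal.ofReal ((u y - u x) ^ 2 * ‖x - y‖ ^ (-(d : ℝ) - α))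

/-- Condition (K): `k` is a measurable, nonnegative, a.e.-symmetric kernel bounded between the
measurable even functions `L` and `U`, with `L ≠ 0` on a set of positive measure. -/
def condK (d : ℕ) (k : Xd d → Xd d → ℝ) (L U : Xd d → ℝ) : Prop :=
  Measurable (Function.uncurry k) ∧ (∀ x y, 0 ≤ k x y) ∧
  Measurable L ∧ Measurable U ∧ (∀ z, 0 ≤ L z) ∧ (∀ z, 0 ≤ U z) ∧
  (∀ᵐ z : Xd d, L (-z) = L z) ∧ (∀ᵐ z : Xd d, U (-z) = U z) ∧
  (∀ᵐ q : Xd d × Xd d, k q.1 q.2 = k q.2 q.1) ∧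
  (∀ᵐ q : Xd d × Xd d, L (q.1 - q.2) ≤ k q.1 q.2 ∧ k q.1 q.2 ≤ U (q.1 - q.2)) ∧
  0 < volume {z : Xd d | L z ≠ 0}

/-- Condition (U0): `∫ (|z|² ∧ 1) U(z) dz ≤ C₀`. -/
def condU0 (d : ℕ) (U : Xd d → ℝ) (C₀ : ℝ) : Prop :=
  (∫⁻ z : Xd d, ENNReal.ofReal (min (‖z‖ ^ 2) 1 * U z)) ≤ ENNReal.ofReal C₀

/-- Condition (U1): `∫_{B_r} |z|² U(z) dz ≤ C₁ r^{2-α}` for every `r ∈ (0,1)`. -/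
def condU1 (d : ℕ) (α : ℝ) (U : Xd d → ℝ) (C₁ : ℝ) : Prop :=
  ∀ r : ℝ, 0 < r → r < 1 →
    (∫⁻ z in ball (0 : Xd d) r, ENNReal.ofReal (‖z‖ ^ 2 * U z)) ≤ ENNReal.ofReal (C₁ * r ^ (2 - α))

/-- Condition (U1'): `∫_{ℝ^d} (r² ∧ |z|²) U(z) dz ≤ C₄ r^{2-α}` for every `r ∈ (0,1)`. -/
def condU1' (d : ℕ) (α : ℝ) (U : Xd d → ℝ) (C₄ : ℝ) : Prop :=
  ∀ r : ℝ, 0 < r → r < 1 →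
    (∫⁻ z : Xd d, ENNReal.ofReal (min (r ^ 2) (‖z‖ ^ 2) * U z)) ≤ ENNReal.ofReal (C₄ * r ^ (2 - α))

/-- Condition (L1): every annulus `B_{a^{-n+1}} \ B_{a^{-n}}` contains a ball of radius
`C₂ a^{-n}` on which `L(z) ≥ C₃ (2-α) |z|^{-d-α}`. -/
def condL1 (d : ℕ) (α : ℝ) (L : Xd d → ℝ) (a C₂ C₃ : ℝ) : Prop :=
  ∀ n : ℕ, ∃ x : Xd d,
    ball x (C₂ * a ^ (-(n : ℝ))) ⊆
      ball (0 : Xd d) (a ^ (-(n : ℝ) + 1)) \ ball (0 : Xd d) (a ^ (-(n : ℝ))) ∧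
    ∀ z ∈ ball x (C₂ * a ^ (-(n : ℝ))), C₃ * (2 - α) * ‖z‖ ^ (-(d : ℝ) - α) ≤ L z

/-- Condition (U2): `limsup_{R→∞} R^γ ∫_{|z|>R} U(z) dz ≤ 1`. -/
def condU2 (d : ℕ) (U : Xd d → ℝ) (γ : ℝ) : Prop :=
  Filter.limsup
    (fun R : ℝ =>
      ENNReal.ofReal (R ^ γ) * ∫⁻ z in {z : Xd d | R < ‖z‖}, ENNReal.ofReal (U z))
    Filter.atTop ≤ 1

/-- Condition (A) with constant `cA ≥ 1`: for every ball `B` of radius `< 1` and every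
`u ∈ C_c^∞(B)`, `cA⁻¹ E^α_B(u,u) ≤ E^k_B(u,u) ≤ cA E^α_B(u,u)`. -/
def condA (d : ℕ) (α : ℝ) (k : Xd d → Xd d → ℝ) (cA : ℝ) : Prop :=
  ∀ (x₀ : Xd d) (r : ℝ), 0 < r → r < 1 → ∀ u : Xd d → ℝ,
    ContDiff ℝ (⊤ : ℕ∞) u → tsupport u ⊆ ball x₀ r →
    ENNReal.ofReal cA⁻¹ * energyA d α (ball x₀ r) u ≤ energyK d (ball x₀ r) k u ∧
    energyK d (ball x₀ r) k u ≤ ENNReal.ofReal cA * energyA d α (ball x₀ r) u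

/-- Condition (B) with constant `cB > 0`: existence of smooth cutoff functions with the
nonlocal gradient bound `sup_x ∫ (τ(y)-τ(x))² k(x,y) dy ≤ cB ρ^{-α}`. -/
def condB (d : ℕ) (α : ℝ) (k : Xd d → Xd d → ℝ) (cB : ℝ) : Prop :=
  ∀ R ρ : ℝ, 0 < R → R < 1 → 0 < ρ → ρ < 1 →
    ∃ τ : Xd d → ℝ, ContDiff ℝ (⊤ : ℕ∞) τ ∧ (∀ x, 0 ≤ τ x) ∧
      tsupport τ = closedBall (0 : Xd d) (R + ρ) ∧ (∀ x ∈ ball (0 : Xd d) R, τ x = 1) ∧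
      ∀ x : Xd d,
        (∫⁻ y : Xd d, ENNReal.ofReal ((τ y - τ x) ^ 2 * k x y)) ≤
          ENNReal.ofReal (cB * ρ ^ (-α))

/-- Membership in `H^{α/2}_loc(Ω)`: for every `φ ∈ C_c^∞(Ω)` the Gagliardo seminorm of `φ·u`
is finite. -/
def memHloc (d : ℕ) (α : ℝ) (u : Xd d → ℝ) (Ω : Set (Xd d)) : Prop :=
  ∀ φ : Xd d → ℝ, ContDiff ℝ (⊤ : ℕ∞) φ → HasCompactSupport φ → tsupport φ ⊆ Ω →
    (∫⁻ x : Xd d, ∫⁻ y : Xd d,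
        ENNReal.ofReal ((φ x * u x - φ y * u y) ^ 2 * ‖x - y‖ ^ (-(d : ℝ) - α))) < ∞

/-- The bilinear form `E(u,v) = ∫∫ (u(y)-u(x))(v(y)-v(x)) k(x,y) dy dx`. -/
noncomputable def bilinE (d : ℕ) (k : Xd d → Xd d → ℝ) (u v : Xd d → ℝ) : ℝ :=
  ∫ x : Xd d, ∫ y : Xd d, (u y - u x) * (v y - v x) * k x y

namespace GlobalUpperAux

variable {d : ℕ}

/-- `FF d u z = ∫ (u(x+z)-u(x))² dx`. -/
noncomputable def FF (d : ℕ) (u : Xd d → ℝ) (z : Xd d) : ℝ≥0∞ :=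
  ∫⁻ x : Xd d, ENNReal.ofReal ((u (x + z) - u x) ^ 2)

lemma measurable_FF {u : Xd d → ℝ} (hu : Measurable u) : Measurable (FF d u) := by
  have h : Measurable (Function.uncurry fun z x : Xd d =>
      ENNReal.ofReal ((u (x + z) - u x) ^ 2)) := by
    apply ENNReal.measurable_ofReal.comp
    exact ((hu.comp (measurable_snd.add measurable_fst)).sub (hu.comp measurable_snd)).pow_const 2
  exact h.lintegral_prod_right

lemma FF_add_le {u : Xd d → ℝ} (hu : Measurable u) (z w : Xd d) :
    FF d u (z + w) ≤ 2 * FF d u z + 2 * FF d u w := by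
  have hmeas1 : Measurable fun x : Xd d => ENNReal.ofReal ((u (x + z) - u x) ^ 2) :=
    ENNReal.measurable_ofReal.comp (((hu.comp (measurable_add_const z)).sub hu).pow_const 2)
  have hmeas2 : Measurable fun x : Xd d => ENNReal.ofReal ((u (x + w) - u x) ^ 2) :=
    ENNReal.measurable_ofReal.comp (((hu.comp (measurable_add_const w)).sub hu).pow_const 2)
  have key : ∀ x : Xd d, ENNReal.ofReal ((u (x + (z + w)) - u x) ^ 2) ≤
      2 * ENNReal.ofReal ((u ((x + w) + z) - u (x + w)) ^ 2)
        + 2 * ENNReal.ofReal ((u (x + w) - u x) ^ 2) := by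
    intro x
    have hx : x + (z + w) = (x + w) + z := by abel
    rw [hx]
    set a := u ((x + w) + z)
    set b := u (x + w)
    set e := u x
    have h1 : (a - e) ^ 2 ≤ 2 * (a - b) ^ 2 + 2 * (b - e) ^ 2 := by
      nlinarith [sq_nonneg (a + e - 2 * b)]
    calc ENNReal.ofReal ((a - e) ^ 2)
        ≤ ENNReal.ofReal (2 * (a - b) ^ 2 + 2 * (b - e) ^ 2) := ENNReal.ofReal_le_ofReal h1
      _ = 2 * ENNReal.ofReal ((a - b) ^ 2) + 2 * ENNReal.ofReal ((b - e) ^ 2) := by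
          rw [ENNReal.ofReal_add (by positivity) (by positivity),
            ENNReal.ofReal_mul (by norm_num), ENNReal.ofReal_mul (by norm_num)]
          norm_num
  have hmeas3 : Measurable fun x : Xd d =>
      ENNReal.ofReal ((u ((x + w) + z) - u (x + w)) ^ 2) :=
    hmeas1.comp (measurable_add_const w)
  calc FF d u (z + w)
      ≤ ∫⁻ x : Xd d, (2 * ENNReal.ofReal ((u ((x + w) + z) - u (x + w)) ^ 2)
          + 2 * ENNReal.ofReal ((u (x + w) - u x) ^ 2)) := lintegral_mono key
    _ = 2 * (∫⁻ x : Xd d, ENNReal.ofReal ((u ((x + w) + z) - u (x + w)) ^ 2))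
          + 2 * (∫⁻ x : Xd d, ENNReal.ofReal ((u (x + w) - u x) ^ 2)) := by
        rw [lintegral_add_left (hmeas3.const_mul 2),
          lintegral_const_mul 2 hmeas3,
          lintegral_const_mul 2 hmeas2]
    _ = 2 * FF d u z + 2 * FF d u w := by
        congr 2
        exact lintegral_add_right_eq_self
          (fun x => ENNReal.ofReal ((u (x + z) - u x) ^ 2)) w

lemma FF_avg {u : Xd d → ℝ} (hu : Measurable u) {z : Xd d} (hz : z ≠ 0) :
    FF d u z ≤ 4 * (volume (ball (0 : Xd d) ‖z‖))⁻¹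
      * ∫⁻ w in ball (0 : Xd d) (2 * ‖z‖), FF d u w := by
  have hF := measurable_FF hu
  have hr : (0 : ℝ) < ‖z‖ := norm_pos_iff.mpr hz
  set B := ball (0 : Xd d) ‖z‖ with hB
  have hBm : MeasurableSet B := measurableSet_ball
  have hμ0 : volume B ≠ 0 := (measure_ball_pos volume 0 hr).ne'
  have hμt : volume B ≠ ∞ := measure_ball_lt_top.ne
  set I := ∫⁻ w in ball (0 : Xd d) (2 * ‖z‖), FF d u w with hI
  have hsub : B ⊆ ball (0 : Xd d) (2 * ‖z‖) := ball_subset_ball (by linarith)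
  have key : ∀ w : Xd d, FF d u z ≤ 2 * FF d u w + 2 * FF d u (z - w) := by
    intro w
    have h := FF_add_le hu w (z - w)
    rwa [add_sub_cancel] at h
  have h2 : ∫⁻ w in B, FF d u (z - w) ≤ I := by
    have hmp : MeasurePreserving (fun v : Xd d => z - v) volume volume :=
      Measure.measurePreserving_sub_left volume z
    have hmeasind : Measurable (B.indicator fun w => FF d u (z - w)) :=
      (hF.comp (measurable_const.sub measurable_id)).indicator hBm
    have e2 : ∫⁻ v : Xd d, B.indicator (fun w => FF d u (z - w)) (z - v)
        = ∫⁻ w : Xd d, B.indicator (fun w => FF d u (z - w)) w := hmp.lintegral_comp hmeasind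
    have e3 : ∀ v : Xd d, B.indicator (fun w => FF d u (z - w)) (z - v)
        = ((fun v : Xd d => z - v) ⁻¹' B).indicator (FF d u) v := by
      intro v
      by_cases h : z - v ∈ B
      · rw [Set.indicator_of_mem h, Set.indicator_of_mem (by exact h), sub_sub_cancel]
      · rw [Set.indicator_of_notMem h, Set.indicator_of_notMem (by exact h)]
    have e4 : (fun v : Xd d => z - v) ⁻¹' B ⊆ ball (0 : Xd d) (2 * ‖z‖) := by
      intro v hv
      simp only [Set.mem_preimage, hB, mem_ball_zero_iff] at hv ⊢
      have h5 : ‖v‖ - ‖z‖ ≤ ‖v - z‖ := norm_sub_norm_le v z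
      rw [norm_sub_rev] at h5
      linarith
    calc ∫⁻ w in B, FF d u (z - w)
        = ∫⁻ w : Xd d, B.indicator (fun w => FF d u (z - w)) w :=
          (lintegral_indicator hBm _).symm
      _ = ∫⁻ v : Xd d, ((fun v : Xd d => z - v) ⁻¹' B).indicator (FF d u) v := by
          rw [← e2]; exact lintegral_congr e3
      _ = ∫⁻ v in (fun v : Xd d => z - v) ⁻¹' B, FF d u v :=
          lintegral_indicator (hBm.preimage (measurable_const.sub measurable_id)) _
      _ ≤ I := lintegral_mono_set e4
  have h1 : ∫⁻ w in B, FF d u w ≤ I := lintegral_mono_set hsub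
  have main : volume B * FF d u z ≤ 4 * I := by
    calc volume B * FF d u z = FF d u z * volume B := mul_comm _ _
      _ = ∫⁻ _ in B, FF d u z := (setLIntegral_const B _).symm
      _ ≤ ∫⁻ w in B, (2 * FF d u w + 2 * FF d u (z - w)) := lintegral_mono fun w => key w
      _ = 2 * (∫⁻ w in B, FF d u w) + 2 * (∫⁻ w in B, FF d u (z - w)) := by
          have hFm : Measurable fun w : Xd d => FF d u (z - w) :=
            hF.comp (measurable_const.sub measurable_id)
          rw [lintegral_add_left (hF.const_mul 2),
            lintegral_const_mul 2 hF,
            lintegral_const_mul 2 hFm]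
      _ ≤ 2 * I + 2 * I := add_le_add (mul_le_mul_right h1 2) (mul_le_mul_right h2 2)
      _ = 4 * I := by ring
  calc FF d u z = (volume B)⁻¹ * (volume B * FF d u z) := by
        rw [← mul_assoc, ENNReal.inv_mul_cancel hμ0 hμt, one_mul]
    _ ≤ (volume B)⁻¹ * (4 * I) := mul_le_mul_right main _
    _ = 4 * (volume B)⁻¹ * I := by ring

lemma double_congr (κ : Xd d → Xd d → ℝ) {u v : Xd d → ℝ} (h : u =ᵐ[volume] v) :
    ∫⁻ x : Xd d, ∫⁻ y : Xd d, ENNReal.ofReal ((u y - u x) ^ 2 * κ x y)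
      = ∫⁻ x : Xd d, ∫⁻ y : Xd d, ENNReal.ofReal ((v y - v x) ^ 2 * κ x y) := by
  apply lintegral_congr_ae
  filter_upwards [h] with x hx
  apply lintegral_congr_ae
  filter_upwards [h] with y hy
  rw [hx, hy]

lemma double_eq {u : Xd d → ℝ} (hu : Measurable u) (W : Xd d → ℝ) (hW : Measurable W)
    (hWe : ∀ᵐ z : Xd d, W (-z) = W z) :
    ∫⁻ x : Xd d, ∫⁻ y : Xd d, ENNReal.ofReal ((u y - u x) ^ 2 * W (x - y))
      = ∫⁻ z : Xd d, FF d u z * ENNReal.ofReal (W z) := by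
  have step1 : ∀ x : Xd d, ∫⁻ y : Xd d, ENNReal.ofReal ((u y - u x) ^ 2 * W (x - y))
      = ∫⁻ z : Xd d, ENNReal.ofReal ((u (x + z) - u x) ^ 2 * W z) := by
    intro x
    rw [← lintegral_add_left_eq_self
      (fun y => ENNReal.ofReal ((u y - u x) ^ 2 * W (x - y))) x]
    apply lintegral_congr_ae
    filter_upwards [hWe] with z hzW
    rw [show x - (x + z) = -z by abel, hzW]
  rw [lintegral_congr step1]
  have hmeas : Measurable (Function.uncurry fun x z : Xd d =>
      ENNReal.ofReal ((u (x + z) - u x) ^ 2 * W z)) := by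
    apply ENNReal.measurable_ofReal.comp
    exact (((hu.comp (measurable_fst.add measurable_snd)).sub
      (hu.comp measurable_fst)).pow_const 2).mul (hW.comp measurable_snd)
  rw [lintegral_lintegral_swap hmeas.aemeasurable]
  apply lintegral_congr
  intro z
  simp_rw [ENNReal.ofReal_mul (sq_nonneg _)]
  have hm : Measurable fun x : Xd d => ENNReal.ofReal ((u (x + z) - u x) ^ 2) :=
    ENNReal.measurable_ofReal.comp (((hu.comp (measurable_add_const z)).sub hu).pow_const 2)
  rw [lintegral_mul_const _ hm]
  rfl

lemma tail_est {α C : ℝ} (hα : 0 < α) (hC : 0 < C) {U : Xd d → ℝ} (hU : Measurable U)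
    (hU1 : ∀ r : ℝ, 0 < r →
      (∫⁻ z in ball (0 : Xd d) r, ENNReal.ofReal (‖z‖ ^ 2 * U z))
        ≤ ENNReal.ofReal (C * r ^ (2 - α)))
    {s : ℝ} (hs : 0 < s) :
    ∫⁻ z in {z : Xd d | s < ‖z‖}, ENNReal.ofReal (‖z‖ ^ (-(d : ℝ))) * ENNReal.ofReal (U z)
      ≤ ENNReal.ofReal (C * 2 ^ (2 - α) * (1 - (2 : ℝ) ^ (-(d : ℝ) - α))⁻¹
          * s ^ (-(d : ℝ) - α)) := by
  classical
  have hd0 : (0 : ℝ) ≤ d := Nat.cast_nonneg d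
  set A : ℕ → Set (Xd d) := fun j => {z | s * 2 ^ j ≤ ‖z‖ ∧ ‖z‖ < s * 2 ^ (j + 1)} with hA
  have hAm : ∀ j, MeasurableSet (A j) := fun j =>
    (measurableSet_le measurable_const measurable_norm).inter
      (measurableSet_lt measurable_norm measurable_const)
  have hcover : {z : Xd d | s < ‖z‖} ⊆ ⋃ j, A j := by
    intro z hz
    simp only [Set.mem_setOf_eq] at hz
    have hex : ∃ n : ℕ, ‖z‖ < s * 2 ^ n := by
      obtain ⟨n, hn⟩ := pow_unbounded_of_one_lt (‖z‖ / s) (one_lt_two (α := ℝ))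
      exact ⟨n, by rw [div_lt_iff₀ hs] at hn; linarith [hn]⟩
    set n := Nat.find hex with hn
    have hspec : ‖z‖ < s * 2 ^ n := Nat.find_spec hex
    have hn0 : n ≠ 0 := by
      intro h
      rw [h, pow_zero, mul_one] at hspec
      linarith
    refine Set.mem_iUnion.mpr ⟨n - 1, ⟨?_, ?_⟩⟩
    · by_contra hlt
      push_neg at hlt
      exact Nat.find_min hex (Nat.pred_lt hn0) hlt
    · have hnn : n - 1 + 1 = n := Nat.succ_pred_eq_of_pos (Nat.pos_of_ne_zero hn0)
      rw [hnn]
      exact hspec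
  have hdis : Pairwise (Function.onFun Disjoint A) := by
    have key : ∀ i j : ℕ, i < j → Disjoint (A i) (A j) := by
      intro i j hij
      rw [Set.disjoint_left]
      rintro z ⟨hi1, hi2⟩ ⟨hj1, hj2⟩
      have hle2 : s * 2 ^ (i + 1) ≤ s * 2 ^ j :=
        mul_le_mul_of_nonneg_left (pow_le_pow_right₀ (by norm_num) hij) hs.le
      linarith
    intro i j hij
    rcases hij.lt_or_gt with h | h
    · exact key i j h
    · exact (key j i h).symm
  set g : Xd d → ℝ≥0∞ := fun z =>
    ENNReal.ofReal (‖z‖ ^ (-(d : ℝ))) * ENNReal.ofReal (U z) with hg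
  have h2pos : (0 : ℝ) < 2 := two_pos
  have hterm : ∀ j : ℕ, ∫⁻ z in A j, g z
      ≤ ENNReal.ofReal ((C * 2 ^ (2 - α) * s ^ (-(d : ℝ) - α))
          * ((2 : ℝ) ^ (-(d : ℝ) - α)) ^ j) := by
    intro j
    have hrj : (0 : ℝ) < s * 2 ^ j := by positivity
    calc ∫⁻ z in A j, g z
        ≤ ∫⁻ z in A j, ENNReal.ofReal ((s * 2 ^ j) ^ (-(d : ℝ) - 2))
            * ENNReal.ofReal (‖z‖ ^ 2 * U z) := by
          apply setLIntegral_mono' (hAm j)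
          rintro z ⟨hz1, hz2⟩
          have hz0 : (0 : ℝ) < ‖z‖ := lt_of_lt_of_le hrj hz1
          have e1 : ‖z‖ ^ (-(d : ℝ)) = ‖z‖ ^ (-(d : ℝ) - 2) * ‖z‖ ^ (2 : ℕ) := by
            rw [← Real.rpow_natCast ‖z‖ 2, ← Real.rpow_add hz0]
            norm_num
          have e2 : ‖z‖ ^ (-(d : ℝ) - 2) ≤ (s * 2 ^ j) ^ (-(d : ℝ) - 2) :=
            Real.rpow_le_rpow_of_nonpos hrj hz1 (by linarith)
          calc ENNReal.ofReal (‖z‖ ^ (-(d : ℝ))) * ENNReal.ofReal (U z)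
              = ENNReal.ofReal (‖z‖ ^ (-(d : ℝ) - 2)) * ENNReal.ofReal (‖z‖ ^ 2 * U z) := by
                rw [e1, ENNReal.ofReal_mul (by positivity), mul_assoc,
                  ← ENNReal.ofReal_mul (by positivity)]
            _ ≤ ENNReal.ofReal ((s * 2 ^ j) ^ (-(d : ℝ) - 2))
                * ENNReal.ofReal (‖z‖ ^ 2 * U z) :=
                mul_le_mul_left (ENNReal.ofReal_le_ofReal e2) _
      _ = ENNReal.ofReal ((s * 2 ^ j) ^ (-(d : ℝ) - 2))
            * ∫⁻ z in A j, ENNReal.ofReal (‖z‖ ^ 2 * U z) :=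
          lintegral_const_mul' _ _ ENNReal.ofReal_ne_top
      _ ≤ ENNReal.ofReal ((s * 2 ^ j) ^ (-(d : ℝ) - 2))
            * ENNReal.ofReal (C * (s * 2 ^ (j + 1)) ^ (2 - α)) := by
          apply mul_le_mul_right
          refine le_trans (lintegral_mono_set ?_) (hU1 (s * 2 ^ (j + 1)) (by positivity))
          rintro z ⟨hz1, hz2⟩
          exact mem_ball_zero_iff.mpr hz2
      _ = ENNReal.ofReal ((s * 2 ^ j) ^ (-(d : ℝ) - 2)
            * (C * (s * 2 ^ (j + 1)) ^ (2 - α))) :=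
          (ENNReal.ofReal_mul (by positivity)).symm
      _ = ENNReal.ofReal ((C * 2 ^ (2 - α) * s ^ (-(d : ℝ) - α))
            * ((2 : ℝ) ^ (-(d : ℝ) - α)) ^ j) := by
          congr 1
          have c1 : ((2 : ℝ) ^ j) = (2 : ℝ) ^ (j : ℝ) := (Real.rpow_natCast 2 j).symm
          have c2 : ((2 : ℝ) ^ (j + 1)) = (2 : ℝ) ^ ((j : ℝ) + 1) := by
            rw [← Real.rpow_natCast 2 (j + 1)]
            push_cast
            ring_nf
          have c3 : (((2 : ℝ) ^ (-(d : ℝ) - α)) ^ j) = (2 : ℝ) ^ ((-(d : ℝ) - α) * j) := by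
            rw [← Real.rpow_natCast ((2 : ℝ) ^ (-(d : ℝ) - α)) j,
              ← Real.rpow_mul (by norm_num)]
          rw [c1, c2, c3,
            Real.mul_rpow hs.le (Real.rpow_nonneg (by norm_num) _),
            Real.mul_rpow hs.le (Real.rpow_nonneg (by norm_num) _),
            ← Real.rpow_mul (by norm_num : (0:ℝ) ≤ 2),
            ← Real.rpow_mul (by norm_num : (0:ℝ) ≤ 2)]
          calc s ^ (-(d : ℝ) - 2) * 2 ^ ((j : ℝ) * (-(d : ℝ) - 2))
                * (C * (s ^ (2 - α) * 2 ^ (((j : ℝ) + 1) * (2 - α))))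
              = C * ((s ^ (-(d : ℝ) - 2) * s ^ (2 - α))
                  * (2 ^ ((j : ℝ) * (-(d : ℝ) - 2)) * 2 ^ (((j : ℝ) + 1) * (2 - α)))) := by
                ring
            _ = C * (s ^ ((-(d : ℝ) - 2) + (2 - α))
                  * 2 ^ (((j : ℝ) * (-(d : ℝ) - 2)) + (((j : ℝ) + 1) * (2 - α)))) := by
                rw [← Real.rpow_add hs, ← Real.rpow_add h2pos]
            _ = C * (s ^ (-(d : ℝ) - α) * 2 ^ ((2 - α) + (-(d : ℝ) - α) * (j : ℝ))) := by
                rw [show (-(d : ℝ) - 2) + (2 - α) = -(d : ℝ) - α by ring,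
                  show ((j : ℝ) * (-(d : ℝ) - 2)) + (((j : ℝ) + 1) * (2 - α))
                    = (2 - α) + (-(d : ℝ) - α) * (j : ℝ) by ring]
            _ = C * (s ^ (-(d : ℝ) - α) * (2 ^ (2 - α) * 2 ^ ((-(d : ℝ) - α) * (j : ℝ)))) := by
                rw [Real.rpow_add h2pos]
            _ = C * 2 ^ (2 - α) * s ^ (-(d : ℝ) - α) * 2 ^ ((-(d : ℝ) - α) * (j : ℝ)) := by
                ring
  have hq0 : (0 : ℝ) ≤ (2 : ℝ) ^ (-(d : ℝ) - α) := Real.rpow_nonneg (by norm_num) _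
  have hq1 : (2 : ℝ) ^ (-(d : ℝ) - α) < 1 :=
    Real.rpow_lt_one_of_one_lt_of_neg one_lt_two (by linarith)
  calc ∫⁻ z in {z : Xd d | s < ‖z‖}, g z
      ≤ ∫⁻ z in ⋃ j, A j, g z := lintegral_mono_set hcover
    _ = ∑' j, ∫⁻ z in A j, g z := lintegral_iUnion hAm hdis g
    _ ≤ ∑' j, ENNReal.ofReal ((C * 2 ^ (2 - α) * s ^ (-(d : ℝ) - α))
          * ((2 : ℝ) ^ (-(d : ℝ) - α)) ^ j) := ENNReal.tsum_le_tsum hterm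
    _ = ENNReal.ofReal (C * 2 ^ (2 - α) * s ^ (-(d : ℝ) - α))
          * ∑' j, (ENNReal.ofReal ((2 : ℝ) ^ (-(d : ℝ) - α))) ^ j := by
        have hnn : (0:ℝ) ≤ C * 2 ^ (2 - α) * s ^ (-(d : ℝ) - α) := by positivity
        simp_rw [ENNReal.ofReal_mul hnn, ENNReal.ofReal_pow hq0]
        rw [ENNReal.tsum_mul_left]
    _ = ENNReal.ofReal (C * 2 ^ (2 - α) * s ^ (-(d : ℝ) - α))
          * (1 - ENNReal.ofReal ((2 : ℝ) ^ (-(d : ℝ) - α)))⁻¹ := by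
        rw [ENNReal.tsum_geometric]
    _ = ENNReal.ofReal (C * 2 ^ (2 - α) * (1 - (2 : ℝ) ^ (-(d : ℝ) - α))⁻¹
          * s ^ (-(d : ℝ) - α)) := by
        rw [← ENNReal.ofReal_one, ← ENNReal.ofReal_sub _ hq0,
          ← ENNReal.ofReal_inv_of_pos (by linarith), ← ENNReal.ofReal_mul (by positivity)]
        congr 1
        ring

lemma key_step {α C : ℝ} (hα : 0 < α) (hC : 0 < C) (hd : 1 ≤ d) {u : Xd d → ℝ}
    (hu : Measurable u) {U : Xd d → ℝ} (hU : Measurable U)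
    (hU1 : ∀ r : ℝ, 0 < r →
      (∫⁻ z in ball (0 : Xd d) r, ENNReal.ofReal (‖z‖ ^ 2 * U z))
        ≤ ENNReal.ofReal (C * r ^ (2 - α))) :
    ∫⁻ z : Xd d, FF d u z * ENNReal.ofReal (U z)
      ≤ ENNReal.ofReal (4 * ((volume (ball (0 : Xd d) 1)).toReal)⁻¹ * (2 : ℝ) ^ ((d : ℝ) + α)
            * (C * 2 ^ (2 - α) * (1 - (2 : ℝ) ^ (-(d : ℝ) - α))⁻¹))
          * ∫⁻ w : Xd d, FF d u w * ENNReal.ofReal (‖w‖ ^ (-(d : ℝ) - α)) := by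
  classical
  haveI : Nontrivial (Xd d) := Module.nontrivial_of_finrank_pos (R := ℝ)
    (by rw [finrank_euclideanSpace_fin]; omega)
  have hF := measurable_FF hu
  have h0 : ∀ᵐ z : Xd d, z ≠ 0 := by
    rw [ae_iff]
    simp only [not_not]
    simpa using measure_singleton (0 : Xd d)
  set ω := volume (ball (0 : Xd d) 1) with hωdef
  have hω0 : ω ≠ 0 := (measure_ball_pos volume 0 one_pos).ne'
  have hωt : ω ≠ ∞ := measure_ball_lt_top.ne
  set ωr := ω.toReal with hωrdef
  have hωrpos : 0 < ωr := ENNReal.toReal_pos hω0 hωt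
  have hωinv : ω⁻¹ = ENNReal.ofReal (ωr⁻¹) := by
    conv_lhs => rw [← ENNReal.ofReal_toReal hωt]
    rw [← ENNReal.ofReal_inv_of_pos hωrpos]
  have hvol : ∀ z : Xd d, z ≠ 0 →
      (volume (ball (0 : Xd d) ‖z‖))⁻¹
        = ENNReal.ofReal (ωr⁻¹) * ENNReal.ofReal (‖z‖ ^ (-(d : ℝ))) := by
    intro z hz
    have hzpos : (0 : ℝ) < ‖z‖ := norm_pos_iff.mpr hz
    rw [Measure.addHaar_ball volume 0 (norm_nonneg z), finrank_euclideanSpace_fin,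
      ENNReal.mul_inv (Or.inr hωt) (Or.inl ENNReal.ofReal_ne_top), hωinv, mul_comm]
    congr 1
    have e : ‖z‖ ^ (-(d : ℝ)) = (‖z‖ ^ (d : ℕ))⁻¹ := by
      rw [Real.rpow_neg (norm_nonneg z), Real.rpow_natCast]
    rw [e, ENNReal.ofReal_inv_of_pos (by positivity)]
  have hvolm : Measurable fun z : Xd d => (volume (ball (0 : Xd d) ‖z‖))⁻¹ := by
    have heq : (fun z : Xd d => volume (ball (0 : Xd d) ‖z‖))
        = fun z : Xd d => ENNReal.ofReal (‖z‖ ^ (d : ℕ)) * volume (ball (0 : Xd d) 1) := by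
      funext z
      rw [Measure.addHaar_ball volume 0 (norm_nonneg z), finrank_euclideanSpace_fin]
    apply Measurable.inv
    rw [heq]
    exact ((measurable_norm.pow_const d).ennreal_ofReal).mul_const _
  set S : Set (Xd d × Xd d) := {p | ‖p.2‖ < 2 * ‖p.1‖} with hSdef
  have hS : MeasurableSet S :=
    measurableSet_lt (measurable_norm.comp measurable_snd)
      ((measurable_norm.comp measurable_fst).const_mul 2)
  set Φ : Xd d × Xd d → ℝ≥0∞ := fun p =>
    (4 * (volume (ball (0 : Xd d) ‖p.1‖))⁻¹ * ENNReal.ofReal (U p.1))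
      * S.indicator (fun q => FF d u q.2) p with hΦdef
  have hΦ : Measurable Φ := by
    apply Measurable.mul
    · exact ((hvolm.comp measurable_fst).const_mul 4).mul
        (ENNReal.measurable_ofReal.comp (hU.comp measurable_fst))
    · exact (hF.comp measurable_snd).indicator hS
  have stepA : ∫⁻ z : Xd d, FF d u z * ENNReal.ofReal (U z)
      ≤ ∫⁻ z : Xd d, ∫⁻ w : Xd d, Φ (z, w) := by
    apply lintegral_mono_ae
    filter_upwards [h0] with z hz
    have hform : ∀ w : Xd d, Φ (z, w)
        = (4 * (volume (ball (0 : Xd d) ‖z‖))⁻¹ * ENNReal.ofReal (U z))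
          * (ball (0 : Xd d) (2 * ‖z‖)).indicator (FF d u) w := by
      intro w
      simp only [hΦdef]
      congr 1
      by_cases h : ‖w‖ < 2 * ‖z‖
      · rw [Set.indicator_of_mem (show (z, w) ∈ S from h),
          Set.indicator_of_mem (mem_ball_zero_iff.mpr h)]
      · rw [Set.indicator_of_notMem (show (z, w) ∉ S from h),
          Set.indicator_of_notMem (fun hc => h (mem_ball_zero_iff.mp hc))]
    calc FF d u z * ENNReal.ofReal (U z)
        ≤ (4 * (volume (ball (0 : Xd d) ‖z‖))⁻¹
            * ∫⁻ w in ball (0 : Xd d) (2 * ‖z‖), FF d u w) * ENNReal.ofReal (U z) :=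
          mul_le_mul_left (FF_avg hu hz) _
      _ = ∫⁻ w : Xd d, Φ (z, w) := by
          simp_rw [hform]
          rw [lintegral_const_mul _ (hF.indicator measurableSet_ball),
            lintegral_indicator measurableSet_ball]
          ring
  have stepB : ∫⁻ z : Xd d, ∫⁻ w : Xd d, Φ (z, w)
      = ∫⁻ w : Xd d, ∫⁻ z : Xd d, Φ (z, w) :=
    lintegral_lintegral_swap hΦ.aemeasurable
  set c₂ : ℝ := 4 * ωr⁻¹ * (2 : ℝ) ^ ((d : ℝ) + α)
    * (C * 2 ^ (2 - α) * (1 - (2 : ℝ) ^ (-(d : ℝ) - α))⁻¹) with hc₂def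
  have hq0 : (0 : ℝ) ≤ (2 : ℝ) ^ (-(d : ℝ) - α) := Real.rpow_nonneg (by norm_num) _
  have hq1 : (2 : ℝ) ^ (-(d : ℝ) - α) < 1 :=
    Real.rpow_lt_one_of_one_lt_of_neg one_lt_two
      (by have : (0 : ℝ) ≤ d := Nat.cast_nonneg d; linarith)
  have stepC : ∀ᵐ w : Xd d, (∫⁻ z : Xd d, Φ (z, w))
      ≤ ENNReal.ofReal c₂ * (FF d u w * ENNReal.ofReal (‖w‖ ^ (-(d : ℝ) - α))) := by
    filter_upwards [h0] with w hw
    have hwpos : (0 : ℝ) < ‖w‖ := norm_pos_iff.mpr hw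
    set s : ℝ := ‖w‖ / 2 with hsdef
    have hs : 0 < s := by positivity
    set T : Set (Xd d) := {z : Xd d | s < ‖z‖} with hTdef
    have hT : MeasurableSet T := measurableSet_lt measurable_const measurable_norm
    have hform2 : ∀ z : Xd d, Φ (z, w)
        = (T.indicator (fun z : Xd d =>
            4 * (volume (ball (0 : Xd d) ‖z‖))⁻¹ * ENNReal.ofReal (U z)) z) * FF d u w := by
      intro z
      simp only [hΦdef]
      by_cases h : ‖w‖ < 2 * ‖z‖
      · have h' : z ∈ T := by
          simp only [hTdef, Set.mem_setOf_eq, hsdef]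
          linarith
        rw [Set.indicator_of_mem (show (z, w) ∈ S from h), Set.indicator_of_mem h']
      · have h' : z ∉ T := by
          simp only [hTdef, Set.mem_setOf_eq, hsdef]
          intro hc
          exact h (by linarith)
        rw [Set.indicator_of_notMem (show (z, w) ∉ S from h),
          Set.indicator_of_notMem h', mul_zero, zero_mul]
    have hmeasind : Measurable (T.indicator (fun z : Xd d =>
        4 * (volume (ball (0 : Xd d) ‖z‖))⁻¹ * ENNReal.ofReal (U z))) :=
      ((hvolm.const_mul 4).mul (ENNReal.measurable_ofReal.comp hU)).indicator hT
    have hinner : ∫⁻ z in T, 4 * (volume (ball (0 : Xd d) ‖z‖))⁻¹ * ENNReal.ofReal (U z)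
        ≤ ENNReal.ofReal c₂ * ENNReal.ofReal (‖w‖ ^ (-(d : ℝ) - α)) := by
      have hptwise : ∀ z ∈ T,
          4 * (volume (ball (0 : Xd d) ‖z‖))⁻¹ * ENNReal.ofReal (U z)
            = (4 * ENNReal.ofReal (ωr⁻¹))
              * (ENNReal.ofReal (‖z‖ ^ (-(d : ℝ))) * ENNReal.ofReal (U z)) := by
        intro z hzT
        have hz : z ≠ 0 := by
          intro hc
          simp only [hTdef, Set.mem_setOf_eq, hc, norm_zero] at hzT
          linarith
        rw [hvol z hz]
        ring
      calc ∫⁻ z in T, 4 * (volume (ball (0 : Xd d) ‖z‖))⁻¹ * ENNReal.ofReal (U z)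
          = ∫⁻ z in T, (4 * ENNReal.ofReal (ωr⁻¹))
              * (ENNReal.ofReal (‖z‖ ^ (-(d : ℝ))) * ENNReal.ofReal (U z)) :=
            setLIntegral_congr_fun hT hptwise
        _ = (4 * ENNReal.ofReal (ωr⁻¹))
              * ∫⁻ z in T, ENNReal.ofReal (‖z‖ ^ (-(d : ℝ))) * ENNReal.ofReal (U z) :=
            lintegral_const_mul' _ _
              (ENNReal.mul_ne_top (by norm_num) ENNReal.ofReal_ne_top)
        _ ≤ (4 * ENNReal.ofReal (ωr⁻¹))
              * ENNReal.ofReal (C * 2 ^ (2 - α) * (1 - (2 : ℝ) ^ (-(d : ℝ) - α))⁻¹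
                  * s ^ (-(d : ℝ) - α)) :=
            mul_le_mul_right (tail_est hα hC hU hU1 hs) _
        _ = ENNReal.ofReal (4 * ωr⁻¹
              * (C * 2 ^ (2 - α) * (1 - (2 : ℝ) ^ (-(d : ℝ) - α))⁻¹ * s ^ (-(d : ℝ) - α))) := by
            rw [← ENNReal.ofReal_ofNat, ← ENNReal.ofReal_mul (by norm_num),
              ← ENNReal.ofReal_mul (by positivity)]
        _ = ENNReal.ofReal c₂ * ENNReal.ofReal (‖w‖ ^ (-(d : ℝ) - α)) := by
            have h1q : (0:ℝ) < 1 - (2 : ℝ) ^ (-(d : ℝ) - α) := by linarith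
            have hc₂nn : (0:ℝ) ≤ c₂ := by
              rw [hc₂def]
              have h4 : (0:ℝ) ≤ 4 * ωr⁻¹ := by positivity
              exact mul_nonneg (mul_nonneg h4 (Real.rpow_nonneg (by norm_num) _))
                (mul_nonneg (mul_nonneg hC.le (Real.rpow_nonneg (by norm_num) _))
                  (inv_nonneg.mpr h1q.le))
            rw [← ENNReal.ofReal_mul hc₂nn]
            congr 1
            have hsw : s ^ (-(d : ℝ) - α) = ‖w‖ ^ (-(d : ℝ) - α) * 2 ^ ((d : ℝ) + α) := by
              rw [hsdef, Real.div_rpow (norm_nonneg w) (by norm_num)]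
              rw [div_eq_mul_inv, ← Real.rpow_neg (by norm_num : (0 : ℝ) ≤ 2)]
              congr 1
              ring
            rw [hc₂def, hsw]
            ring
    calc ∫⁻ z : Xd d, Φ (z, w)
        = (∫⁻ z in T, 4 * (volume (ball (0 : Xd d) ‖z‖))⁻¹ * ENNReal.ofReal (U z))
            * FF d u w := by
          simp_rw [hform2]
          rw [lintegral_mul_const _ hmeasind, lintegral_indicator hT]
      _ ≤ (ENNReal.ofReal c₂ * ENNReal.ofReal (‖w‖ ^ (-(d : ℝ) - α))) * FF d u w :=
          mul_le_mul_left hinner _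
      _ = ENNReal.ofReal c₂ * (FF d u w * ENNReal.ofReal (‖w‖ ^ (-(d : ℝ) - α))) := by
          ring
  calc ∫⁻ z : Xd d, FF d u z * ENNReal.ofReal (U z)
      ≤ ∫⁻ z : Xd d, ∫⁻ w : Xd d, Φ (z, w) := stepA
    _ = ∫⁻ w : Xd d, ∫⁻ z : Xd d, Φ (z, w) := stepB
    _ ≤ ∫⁻ w : Xd d, ENNReal.ofReal c₂
          * (FF d u w * ENNReal.ofReal (‖w‖ ^ (-(d : ℝ) - α))) := lintegral_mono_ae stepC
    _ = ENNReal.ofReal c₂ * ∫⁻ w : Xd d, FF d u w * ENNReal.ofReal (‖w‖ ^ (-(d : ℝ) - α)) :=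
        lintegral_const_mul' _ _ ENNReal.ofReal_ne_top

end GlobalUpperAux

/-- Proposition 4 of the paper, second part: if (U1) holds for *all* `r > 0`,
then `E^k_{ℝ^d}(u,u) ≤ c E^α_{ℝ^d}(u,u)` for all `u ∈ L²(ℝ^d)`, with `c = c(α, d, C₁)`. -/
theorem global_upper_comparability_homogeneous (d : ℕ) (hd : 1 ≤ d) (α C₁ : ℝ)
    (hα : 0 < α) (hα2 : α < 2) :
    ∃ c : ℝ, 0 < c ∧
      ∀ (k : Xd d → Xd d → ℝ) (U : Xd d → ℝ),
        Measurable (Function.uncurry k) → (∀ x y, 0 ≤ k x y) →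
        (∀ᵐ q ∂(volume : Measure (Xd d × Xd d)), k q.1 q.2 = k q.2 q.1) →
        Measurable U → (∀ z, 0 ≤ U z) → (∀ᵐ z : Xd d, U (-z) = U z) →
        (∀ᵐ q ∂(volume : Measure (Xd d × Xd d)), k q.1 q.2 ≤ U (q.1 - q.2)) →
        (∀ r : ℝ, 0 < r →
          (∫⁻ z in ball (0 : Xd d) r, ENNReal.ofReal (‖z‖ ^ 2 * U z)) ≤
            ENNReal.ofReal (C₁ * r ^ (2 - α))) →
        ∀ u : Xd d → ℝ, MemLp u 2 (volume : Measure (Xd d)) →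
          energyK d Set.univ k u ≤ ENNReal.ofReal c * energyA d α Set.univ u := by
  classical
  have hC : (0 : ℝ) < max C₁ 1 := lt_of_lt_of_le one_pos (le_max_right _ _)
  have hω0 : volume (ball (0 : Xd d) 1) ≠ 0 := (measure_ball_pos volume 0 one_pos).ne'
  have hωt : volume (ball (0 : Xd d) 1) ≠ ∞ := measure_ball_lt_top.ne
  have hωrpos : 0 < (volume (ball (0 : Xd d) 1)).toReal := ENNReal.toReal_pos hω0 hωt
  have hq0 : (0 : ℝ) ≤ (2 : ℝ) ^ (-(d : ℝ) - α) := Real.rpow_nonneg (by norm_num) _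
  have hq1 : (2 : ℝ) ^ (-(d : ℝ) - α) < 1 :=
    Real.rpow_lt_one_of_one_lt_of_neg one_lt_two
      (by have : (0 : ℝ) ≤ d := Nat.cast_nonneg d; linarith)
  have h1q : (0 : ℝ) < 1 - (2 : ℝ) ^ (-(d : ℝ) - α) := by linarith
  have hβ : (0 : ℝ) < α * (2 - α) := by nlinarith
  have hc₂pos : (0:ℝ) < 4 * ((volume (ball (0 : Xd d) 1)).toReal)⁻¹
      * (2 : ℝ) ^ ((d : ℝ) + α)
      * (max C₁ 1 * 2 ^ (2 - α) * (1 - (2 : ℝ) ^ (-(d : ℝ) - α))⁻¹) := by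
    refine mul_pos (mul_pos (mul_pos (by norm_num) (inv_pos.mpr hωrpos))
      (Real.rpow_pos_of_pos two_pos _)) ?_
    exact mul_pos (mul_pos hC (Real.rpow_pos_of_pos two_pos _)) (inv_pos.mpr h1q)
  refine ⟨(α * (2 - α))⁻¹ * (4 * ((volume (ball (0 : Xd d) 1)).toReal)⁻¹
      * (2 : ℝ) ^ ((d : ℝ) + α)
      * (max C₁ 1 * 2 ^ (2 - α) * (1 - (2 : ℝ) ^ (-(d : ℝ) - α))⁻¹)),
    mul_pos (inv_pos.mpr hβ) hc₂pos, ?_⟩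
  intro k U hk hk0 hsymm hU hU0 hUeven hle hU1c u hu
  obtain hmeas := hu.aestronglyMeasurable.aemeasurable
  set v := hmeas.mk u with hvdef
  have hveq : u =ᵐ[volume] v := hmeas.ae_eq_mk
  have hvmeas : Measurable v := hmeas.measurable_mk
  have hU1 : ∀ r : ℝ, 0 < r →
      (∫⁻ z in ball (0 : Xd d) r, ENNReal.ofReal (‖z‖ ^ 2 * U z))
        ≤ ENNReal.ofReal (max C₁ 1 * r ^ (2 - α)) := by
    intro r hr
    refine le_trans (hU1c r hr) (ENNReal.ofReal_le_ofReal ?_)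
    exact mul_le_mul_of_nonneg_right (le_max_left _ _) (Real.rpow_nonneg hr.le _)
  have hsymU : ∀ᵐ x : Xd d, ∀ᵐ y : Xd d, k x y ≤ U (x - y) := by
    rw [Measure.volume_eq_prod] at hle
    exact Measure.ae_ae_of_ae_prod hle
  have hK : energyK d Set.univ k u
      = ∫⁻ x : Xd d, ∫⁻ y : Xd d, ENNReal.ofReal ((v y - v x) ^ 2 * k x y) := by
    rw [energyK]
    simp only [Measure.restrict_univ]
    exact GlobalUpperAux.double_congr k hveq
  have hA : energyA d α Set.univ u
      = ENNReal.ofReal (α * (2 - α))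
          * ∫⁻ z : Xd d, GlobalUpperAux.FF d v z * ENNReal.ofReal (‖z‖ ^ (-(d : ℝ) - α)) := by
    rw [energyA]
    simp only [Measure.restrict_univ]
    congr 1
    rw [GlobalUpperAux.double_congr (fun x y => ‖x - y‖ ^ (-(d : ℝ) - α)) hveq]
    exact GlobalUpperAux.double_eq hvmeas (fun z => ‖z‖ ^ (-(d : ℝ) - α))
      (measurable_norm.pow measurable_const)
      (Filter.Eventually.of_forall fun z => by simp)
  calc energyK d Set.univ k u
      = ∫⁻ x : Xd d, ∫⁻ y : Xd d, ENNReal.ofReal ((v y - v x) ^ 2 * k x y) := hK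
    _ ≤ ∫⁻ x : Xd d, ∫⁻ y : Xd d, ENNReal.ofReal ((v y - v x) ^ 2 * U (x - y)) := by
        apply lintegral_mono_ae
        filter_upwards [hsymU] with x hx
        apply lintegral_mono_ae
        filter_upwards [hx] with y hy
        exact ENNReal.ofReal_le_ofReal (mul_le_mul_of_nonneg_left hy (sq_nonneg _))
    _ = ∫⁻ z : Xd d, GlobalUpperAux.FF d v z * ENNReal.ofReal (U z) := GlobalUpperAux.double_eq hvmeas U hU hUeven
    _ ≤ ENNReal.ofReal (4 * ((volume (ball (0 : Xd d) 1)).toReal)⁻¹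
            * (2 : ℝ) ^ ((d : ℝ) + α)
            * (max C₁ 1 * 2 ^ (2 - α) * (1 - (2 : ℝ) ^ (-(d : ℝ) - α))⁻¹))
          * ∫⁻ w : Xd d, GlobalUpperAux.FF d v w * ENNReal.ofReal (‖w‖ ^ (-(d : ℝ) - α)) :=
        GlobalUpperAux.key_step hα hC hd hvmeas hU hU1
    _ = ENNReal.ofReal ((α * (2 - α))⁻¹ * (4 * ((volume (ball (0 : Xd d) 1)).toReal)⁻¹
            * (2 : ℝ) ^ ((d : ℝ) + α)
            * (max C₁ 1 * 2 ^ (2 - α) * (1 - (2 : ℝ) ^ (-(d : ℝ) - α))⁻¹)))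
          * energyA d α Set.univ u := by
        have hscal : ENNReal.ofReal ((α * (2 - α))⁻¹ * (4 * ((volume (ball (0 : Xd d) 1)).toReal)⁻¹
            * (2 : ℝ) ^ ((d : ℝ) + α)
            * (max C₁ 1 * 2 ^ (2 - α) * (1 - (2 : ℝ) ^ (-(d : ℝ) - α))⁻¹)))
              * ENNReal.ofReal (α * (2 - α))
            = ENNReal.ofReal (4 * ((volume (ball (0 : Xd d) 1)).toReal)⁻¹
            * (2 : ℝ) ^ ((d : ℝ) + α)
            * (max C₁ 1 * 2 ^ (2 - α) * (1 - (2 : ℝ) ^ (-(d : ℝ) - α))⁻¹)) := by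
          rw [← ENNReal.ofReal_mul (mul_pos (inv_pos.mpr hβ) hc₂pos).le]
          congr 1
          rw [mul_right_comm ((α * (2 - α))⁻¹) (4 * ((volume (ball (0 : Xd d) 1)).toReal)⁻¹
            * (2 : ℝ) ^ ((d : ℝ) + α)
            * (max C₁ 1 * 2 ^ (2 - α) * (1 - (2 : ℝ) ^ (-(d : ℝ) - α))⁻¹)) (α * (2 - α)),
            inv_mul_cancel₀ hβ.ne', one_mul]
        rw [hA,
          ← mul_assoc (ENNReal.ofReal ((α * (2 - α))⁻¹ * (4 * ((volume (ball (0 : Xd d) 1)).toReal)⁻¹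
            * (2 : ℝ) ^ ((d : ℝ) + α)
            * (max C₁ 1 * 2 ^ (2 - α) * (1 - (2 : ℝ) ^ (-(d : ℝ) - α))⁻¹))))
            (ENNReal.ofReal (α * (2 - α)))
            (∫⁻ z : Xd d, GlobalUpperAux.FF d v z * ENNReal.ofReal (‖z‖ ^ (-(d : ℝ) - α))),
          hscal]
end
end

section
/- Let d ≥ 1 and ρ > 0. If q ∈ L¹(ℝ^d) is a nonnegative function with supp q ⊆ B_ρ, then for all R > 0 and all measurable functions u : ℝ^d → ℝ, E^{q∗q}_{B_R}(u,u) ≤ 4 ‖q‖_{L¹} E^{q}_{B_{R+ρ}}(u,u), where q∗q denotes the convolution of q with itself. -/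
open MeasureTheory Metric Set Filter
open scoped ENNReal RealInnerProductSpace SchwartzMap

noncomputable section

set_option maxHeartbeats 1000000 in
theorem conv_bound_meas (d : ℕ) (ρ : ℝ) (hρ : 0 < ρ)
    (q : Xd d → ℝ) (hq : Integrable q (volume : Measure (Xd d))) (hqm : Measurable q)
    (hqnonneg : ∀ x, 0 ≤ q x) (hqsupp : Function.support q ⊆ ball (0 : Xd d) ρ)
    (R : ℝ) (hR : 0 < R) (u : Xd d → ℝ) (hu : Measurable u) :
    energyT d (ball (0 : Xd d) R) (fun x => ∫ z : Xd d, q (x - z) * q z) u ≤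
      ENNReal.ofReal (4 * ∫ z : Xd d, q z) * energyT d (ball (0 : Xd d) (R + ρ)) q u := by
  set B : Set (Xd d) := ball (0 : Xd d) R with hBdef
  set B' : Set (Xd d) := ball (0 : Xd d) (R + ρ) with hB'def
  have hBB' : B ⊆ B' := ball_subset_ball (by linarith)
  set Q : Xd d → ℝ≥0∞ := fun z => ENNReal.ofReal (q z) with hQdef
  have mQ : Measurable Q := ENNReal.measurable_ofReal.comp hqm
  set S : Xd d → Xd d → ℝ≥0∞ := fun x y => ENNReal.ofReal ((u y - u x) ^ 2) with hSdef
  have mS2 : Measurable (fun p : Xd d × Xd d => S p.1 p.2) :=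
    ENNReal.measurable_ofReal.comp
      (((hu.comp measurable_snd).sub (hu.comp measurable_fst)).pow_const 2)
  set N : ℝ≥0∞ := ∫⁻ z, Q z with hNdef
  have hNval : ENNReal.ofReal (∫ z, q z) = N :=
    ofReal_integral_eq_lintegral_ofReal hq (Filter.Eventually.of_forall hqnonneg)
  have hNne : N ≠ ⊤ := by rw [← hNval]; exact ENNReal.ofReal_ne_top
  -- translation invariance
  have hQleft : ∀ w : Xd d, (∫⁻ y, Q (w - y)) = N := fun w =>
    (MeasureTheory.Measure.measurePreserving_sub_left volume w).lintegral_comp mQ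
  have hQright : ∀ w : Xd d, (∫⁻ x, Q (x - w)) = N := fun w =>
    lintegral_sub_right_eq_self Q w
  -- support
  have hQzero : ∀ a : Xd d, ρ ≤ ‖a‖ → Q a = 0 := by
    intro a ha
    have hq0 : q a = 0 := by
      by_contra h
      have := hqsupp h
      rw [mem_ball, dist_zero_right] at this
      linarith
    simp [hQdef, hq0]
  -- measurability helpers for fixed points
  have mSx : ∀ x : Xd d, Measurable (fun w => S x w) := fun x =>
    mS2.comp (measurable_prodMk_left)
  have mSy : ∀ y : Xd d, Measurable (fun w => S w y) := fun y =>
    mS2.comp (measurable_prodMk_right)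
  have mQl : ∀ x : Xd d, Measurable (fun w => Q (x - w)) := fun x =>
    mQ.comp (measurable_const.sub measurable_id)
  have mQr : ∀ y : Xd d, Measurable (fun w => Q (w - y)) := fun y =>
    mQ.comp (measurable_id.sub measurable_const)
  -- restriction of the w-integral
  have hrestr1 : ∀ x ∈ B, (∫⁻ w, S x w * Q (x - w)) = ∫⁻ w in B', S x w * Q (x - w) := by
    intro x hx
    have hxn : ‖x‖ < R := by rw [hBdef, mem_ball, dist_zero_right] at hx; exact hx
    have hpt : ∀ w, S x w * Q (x - w) = B'.indicator (fun w => S x w * Q (x - w)) w := by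
      intro w
      by_cases hw : w ∈ B'
      · rw [Set.indicator_of_mem hw]
      · rw [Set.indicator_of_notMem hw]
        have hwn : R + ρ ≤ ‖w‖ := by
          rw [hB'def, mem_ball, dist_zero_right, not_lt] at hw; exact hw
        have h1 : ρ ≤ ‖x - w‖ := by
          have h2 := norm_sub_norm_le w x
          rw [norm_sub_rev w x] at h2
          linarith
        rw [hQzero _ h1, mul_zero]
    rw [lintegral_congr hpt, lintegral_indicator measurableSet_ball]
  have hrestr2 : ∀ y ∈ B, (∫⁻ w, S w y * Q (w - y)) = ∫⁻ w in B', S w y * Q (w - y) := by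
    intro y hy
    have hyn : ‖y‖ < R := by rw [hBdef, mem_ball, dist_zero_right] at hy; exact hy
    have hpt : ∀ w, S w y * Q (w - y) = B'.indicator (fun w => S w y * Q (w - y)) w := by
      intro w
      by_cases hw : w ∈ B'
      · rw [Set.indicator_of_mem hw]
      · rw [Set.indicator_of_notMem hw]
        have hwn : R + ρ ≤ ‖w‖ := by
          rw [hB'def, mem_ball, dist_zero_right, not_lt] at hw; exact hw
        have h1 : ρ ≤ ‖w - y‖ := by
          have h2 := norm_sub_norm_le w y
          linarith
        rw [hQzero _ h1, mul_zero]
    rw [lintegral_congr hpt, lintegral_indicator measurableSet_ball]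
  -- energy on B' in product form
  have hE : energyT d B' q u = ∫⁻ x in B', ∫⁻ y in B', S x y * Q (x - y) := by
    refine lintegral_congr fun x => lintegral_congr fun y => ?_
    exact ENNReal.ofReal_mul (sq_nonneg _)
  set E : ℝ≥0∞ := ∫⁻ x in B', ∫⁻ y in B', S x y * Q (x - y) with hEdef
  set A : ℝ≥0∞ := ∫⁻ x in B, ∫⁻ y in B, ∫⁻ w, S x w * (Q (x - w) * Q (w - y)) with hAdef
  set Bt : ℝ≥0∞ := ∫⁻ x in B, ∫⁻ y in B, ∫⁻ w, S w y * (Q (x - w) * Q (w - y)) with hBtdef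
  -- Step 1
  have step1 : energyT d B (fun x => ∫ z : Xd d, q (x - z) * q z) u ≤
      ∫⁻ x in B, ∫⁻ y in B, ∫⁻ w, S x y * (Q (x - w) * Q (w - y)) := by
    refine lintegral_mono fun x => lintegral_mono fun y => ?_
    have h1 : ENNReal.ofReal ((u y - u x) ^ 2 * ∫ z, q (x - y - z) * q z) =
        S x y * ENNReal.ofReal (∫ z, q (x - y - z) * q z) := ENNReal.ofReal_mul (sq_nonneg _)
    have h2 : ENNReal.ofReal (∫ z, q (x - y - z) * q z) ≤ ∫⁻ z, Q (x - y - z) * Q z := by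
      calc ENNReal.ofReal (∫ z, q (x - y - z) * q z)
          ≤ ‖∫ z, q (x - y - z) * q z‖ₑ := Real.ofReal_le_enorm _
        _ ≤ ∫⁻ z, ‖q (x - y - z) * q z‖ₑ := enorm_integral_le_lintegral_enorm _
        _ = ∫⁻ z, Q (x - y - z) * Q z := by
            refine lintegral_congr fun z => ?_
            rw [← ENNReal.ofReal_mul (hqnonneg _)]
            exact Real.enorm_eq_ofReal (mul_nonneg (hqnonneg _) (hqnonneg _))
    have h3 : (∫⁻ z, Q (x - y - z) * Q z) = ∫⁻ w, Q (x - w) * Q (w - y) := by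
      have := lintegral_add_left_eq_self (μ := (volume : Measure (Xd d)))
        (fun w => Q (x - w) * Q (w - y)) y
      simpa [sub_add_eq_sub_sub] using this
    calc ENNReal.ofReal ((u y - u x) ^ 2 * ∫ z, q (x - y - z) * q z)
        = S x y * ENNReal.ofReal (∫ z, q (x - y - z) * q z) := h1
      _ ≤ S x y * ∫⁻ z, Q (x - y - z) * Q z := mul_le_mul_right h2 _
      _ = S x y * ∫⁻ w, Q (x - w) * Q (w - y) := by rw [h3]
      _ = ∫⁻ w, S x y * (Q (x - w) * Q (w - y)) :=
          (lintegral_const_mul' _ _ ENNReal.ofReal_ne_top).symm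
  -- Step 2
  have step2 : (∫⁻ x in B, ∫⁻ y in B, ∫⁻ w, S x y * (Q (x - w) * Q (w - y))) ≤
      ∫⁻ x in B, ∫⁻ y in B, ∫⁻ w, (2 * S x w + 2 * S w y) * (Q (x - w) * Q (w - y)) := by
    refine lintegral_mono fun x => lintegral_mono fun y => lintegral_mono fun w => ?_
    refine mul_le_mul_left ?_ _
    have hr : (u y - u x) ^ 2 ≤ 2 * (u w - u x) ^ 2 + 2 * (u y - u w) ^ 2 := by
      nlinarith [sq_nonneg ((u w - u x) - (u y - u w))]
    calc S x y ≤ ENNReal.ofReal (2 * (u w - u x) ^ 2 + 2 * (u y - u w) ^ 2) :=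
          ENNReal.ofReal_le_ofReal hr
      _ = 2 * S x w + 2 * S w y := by
          rw [ENNReal.ofReal_add (by positivity) (by positivity),
            ENNReal.ofReal_mul (by norm_num), ENNReal.ofReal_mul (by norm_num)]
          norm_num
          rfl
  -- Step 3 : split
  have step3 : (∫⁻ x in B, ∫⁻ y in B, ∫⁻ w, (2 * S x w + 2 * S w y) * (Q (x - w) * Q (w - y)))
      = 2 * A + 2 * Bt := by
    have mF1 : ∀ x y : Xd d, Measurable (fun w => S x w * (Q (x - w) * Q (w - y))) :=
      fun x y => (mSx x).mul ((mQl x).mul (mQr y))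
    have mF2 : ∀ x y : Xd d, Measurable (fun w => S w y * (Q (x - w) * Q (w - y))) :=
      fun x y => (mSy y).mul ((mQl x).mul (mQr y))
    have inner_eq : ∀ x y : Xd d,
        (∫⁻ w, (2 * S x w + 2 * S w y) * (Q (x - w) * Q (w - y))) =
        2 * (∫⁻ w, S x w * (Q (x - w) * Q (w - y))) +
        2 * (∫⁻ w, S w y * (Q (x - w) * Q (w - y))) := by
      intro x y
      have hpt : ∀ w, (2 * S x w + 2 * S w y) * (Q (x - w) * Q (w - y)) =
          2 * (S x w * (Q (x - w) * Q (w - y))) + 2 * (S w y * (Q (x - w) * Q (w - y))) := by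
        intro w; ring
      rw [lintegral_congr hpt,
        lintegral_add_left ((mF1 x y).const_mul 2),
        lintegral_const_mul 2 (mF1 x y), lintegral_const_mul 2 (mF2 x y)]
    -- uncurried measurability for the middle/outer sums
    have mG1 : Measurable (fun p : Xd d × Xd d => ∫⁻ w, S p.1 w * (Q (p.1 - w) * Q (w - p.2))) := by
      apply Measurable.lintegral_prod_right'
        (f := fun r : (Xd d × Xd d) × Xd d => S r.1.1 r.2 * (Q (r.1.1 - r.2) * Q (r.2 - r.1.2)))
      exact (mS2.comp ((measurable_fst.comp measurable_fst).prodMk measurable_snd)).mul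
        ((mQ.comp ((measurable_fst.comp measurable_fst).sub measurable_snd)).mul
          (mQ.comp (measurable_snd.sub (measurable_snd.comp measurable_fst))))
    have mG2 : Measurable (fun p : Xd d × Xd d => ∫⁻ w, S w p.2 * (Q (p.1 - w) * Q (w - p.2))) := by
      apply Measurable.lintegral_prod_right'
        (f := fun r : (Xd d × Xd d) × Xd d => S r.2 r.1.2 * (Q (r.1.1 - r.2) * Q (r.2 - r.1.2)))
      exact (mS2.comp (measurable_snd.prodMk (measurable_snd.comp measurable_fst))).mul
        ((mQ.comp ((measurable_fst.comp measurable_fst).sub measurable_snd)).mul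
          (mQ.comp (measurable_snd.sub (measurable_snd.comp measurable_fst))))
    have mid_eq : ∀ x : Xd d,
        (∫⁻ y in B, ∫⁻ w, (2 * S x w + 2 * S w y) * (Q (x - w) * Q (w - y))) =
        2 * (∫⁻ y in B, ∫⁻ w, S x w * (Q (x - w) * Q (w - y))) +
        2 * (∫⁻ y in B, ∫⁻ w, S w y * (Q (x - w) * Q (w - y))) := by
      intro x
      have m1 : Measurable (fun y => ∫⁻ w, S x w * (Q (x - w) * Q (w - y))) := by
        apply Measurable.lintegral_prod_right'
          (f := fun r : Xd d × Xd d => S x r.2 * (Q (x - r.2) * Q (r.2 - r.1)))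
        exact (mS2.comp (measurable_const.prodMk measurable_snd)).mul
          ((mQ.comp (measurable_const.sub measurable_snd)).mul
            (mQ.comp (measurable_snd.sub measurable_fst)))
      have m2 : Measurable (fun y => ∫⁻ w, S w y * (Q (x - w) * Q (w - y))) := by
        apply Measurable.lintegral_prod_right'
          (f := fun r : Xd d × Xd d => S r.2 r.1 * (Q (x - r.2) * Q (r.2 - r.1)))
        exact (mS2.comp (measurable_snd.prodMk measurable_fst)).mul
          ((mQ.comp (measurable_const.sub measurable_snd)).mul
            (mQ.comp (measurable_snd.sub measurable_fst)))
      rw [lintegral_congr (inner_eq x),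
        lintegral_add_left (m1.const_mul 2),
        lintegral_const_mul 2 m1, lintegral_const_mul 2 m2]
    have mH1 : Measurable (fun x => ∫⁻ y in B, ∫⁻ w, S x w * (Q (x - w) * Q (w - y))) :=
      Measurable.lintegral_prod_right' (f := fun p : Xd d × Xd d =>
        ∫⁻ w, S p.1 w * (Q (p.1 - w) * Q (w - p.2))) mG1
    have mH2 : Measurable (fun x => ∫⁻ y in B, ∫⁻ w, S w y * (Q (x - w) * Q (w - y))) :=
      Measurable.lintegral_prod_right' (f := fun p : Xd d × Xd d =>
        ∫⁻ w, S w p.2 * (Q (p.1 - w) * Q (w - p.2))) mG2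
    rw [lintegral_congr mid_eq,
      lintegral_add_left (mH1.const_mul 2),
      lintegral_const_mul 2 mH1, lintegral_const_mul 2 mH2]
  -- Step 4 : A ≤ E * N
  have step4 : A ≤ E * N := by
    have h4a : ∀ x : Xd d, (∫⁻ y in B, ∫⁻ w, S x w * (Q (x - w) * Q (w - y))) =
        ∫⁻ w, ∫⁻ y in B, S x w * (Q (x - w) * Q (w - y)) := by
      intro x
      refine lintegral_lintegral_swap ?_
      refine Measurable.aemeasurable ?_
      exact (mS2.comp (measurable_const.prodMk measurable_snd)).mul
        ((mQ.comp (measurable_const.sub measurable_snd)).mul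
          (mQ.comp (measurable_snd.sub measurable_fst)))
    have h4b : ∀ x : Xd d, (∫⁻ w, ∫⁻ y in B, S x w * (Q (x - w) * Q (w - y))) ≤
        ∫⁻ w, (S x w * Q (x - w)) * N := by
      intro x
      refine lintegral_mono fun w => ?_
      have hc : ∀ y : Xd d, S x w * (Q (x - w) * Q (w - y)) = (S x w * Q (x - w)) * Q (w - y) :=
        fun y => (mul_assoc _ _ _).symm
      calc (∫⁻ y in B, S x w * (Q (x - w) * Q (w - y)))
          = ∫⁻ y in B, (S x w * Q (x - w)) * Q (w - y) := lintegral_congr hc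
        _ = (S x w * Q (x - w)) * ∫⁻ y in B, Q (w - y) :=
            lintegral_const_mul' _ _ (ENNReal.mul_ne_top ENNReal.ofReal_ne_top ENNReal.ofReal_ne_top)
        _ ≤ (S x w * Q (x - w)) * N := by
            refine mul_le_mul_right ?_ _
            exact (setLIntegral_le_lintegral _ _).trans (le_of_eq (hQleft w))
    calc A ≤ ∫⁻ x in B, ∫⁻ w, (S x w * Q (x - w)) * N := by
          rw [hAdef]
          refine lintegral_mono fun x => ?_
          rw [h4a x]; exact h4b x
      _ = ∫⁻ x in B, (∫⁻ w, S x w * Q (x - w)) * N := by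
          refine lintegral_congr fun x => ?_
          exact lintegral_mul_const' N _ hNne
      _ = ∫⁻ x in B, (∫⁻ w in B', S x w * Q (x - w)) * N := by
          refine setLIntegral_congr_fun measurableSet_ball ?_
          intro x hx; dsimp only; rw [hrestr1 x hx]
      _ ≤ ∫⁻ x in B', (∫⁻ w in B', S x w * Q (x - w)) * N := lintegral_mono_set hBB'
      _ = (∫⁻ x in B', ∫⁻ w in B', S x w * Q (x - w)) * N := lintegral_mul_const' N _ hNne
      _ = E * N := by rw [hEdef]
  -- Step 5 : Bt ≤ E * N
  have step5 : Bt ≤ E * N := by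
    have mT : Measurable (fun p : Xd d × Xd d => ∫⁻ w, S w p.2 * (Q (p.1 - w) * Q (w - p.2))) := by
      apply Measurable.lintegral_prod_right'
        (f := fun r : (Xd d × Xd d) × Xd d => S r.2 r.1.2 * (Q (r.1.1 - r.2) * Q (r.2 - r.1.2)))
      exact (mS2.comp (measurable_snd.prodMk (measurable_snd.comp measurable_fst))).mul
        ((mQ.comp ((measurable_fst.comp measurable_fst).sub measurable_snd)).mul
          (mQ.comp (measurable_snd.sub (measurable_snd.comp measurable_fst))))
    have h5a : Bt = ∫⁻ y in B, ∫⁻ x in B, ∫⁻ w, S w y * (Q (x - w) * Q (w - y)) := by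
      rw [hBtdef]
      exact lintegral_lintegral_swap mT.aemeasurable
    have h5b : ∀ y : Xd d, (∫⁻ x in B, ∫⁻ w, S w y * (Q (x - w) * Q (w - y))) =
        ∫⁻ w, ∫⁻ x in B, S w y * (Q (x - w) * Q (w - y)) := by
      intro y
      refine lintegral_lintegral_swap (Measurable.aemeasurable ?_)
      exact (mS2.comp (measurable_snd.prodMk measurable_const)).mul
        ((mQ.comp (measurable_fst.sub measurable_snd)).mul
          (mQ.comp (measurable_snd.sub measurable_const)))
    have h5c : ∀ y : Xd d, (∫⁻ w, ∫⁻ x in B, S w y * (Q (x - w) * Q (w - y))) ≤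
        ∫⁻ w, (S w y * Q (w - y)) * N := by
      intro y
      refine lintegral_mono fun w => ?_
      have hc : ∀ x : Xd d, S w y * (Q (x - w) * Q (w - y)) = (S w y * Q (w - y)) * Q (x - w) :=
        fun x => by ring
      calc (∫⁻ x in B, S w y * (Q (x - w) * Q (w - y)))
          = ∫⁻ x in B, (S w y * Q (w - y)) * Q (x - w) := lintegral_congr hc
        _ = (S w y * Q (w - y)) * ∫⁻ x in B, Q (x - w) :=
            lintegral_const_mul' _ _ (ENNReal.mul_ne_top ENNReal.ofReal_ne_top ENNReal.ofReal_ne_top)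
        _ ≤ (S w y * Q (w - y)) * N := by
            refine mul_le_mul_right ?_ _
            exact (setLIntegral_le_lintegral _ _).trans (le_of_eq (hQright w))
    have hswapE : (∫⁻ y in B', ∫⁻ w in B', S w y * Q (w - y)) =
        ∫⁻ w in B', ∫⁻ y in B', S w y * Q (w - y) := by
      refine lintegral_lintegral_swap (Measurable.aemeasurable ?_)
      exact (mS2.comp (measurable_snd.prodMk measurable_fst)).mul
        (mQ.comp (measurable_snd.sub measurable_fst))
    calc Bt = ∫⁻ y in B, ∫⁻ x in B, ∫⁻ w, S w y * (Q (x - w) * Q (w - y)) := h5a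
      _ ≤ ∫⁻ y in B, ∫⁻ w, (S w y * Q (w - y)) * N := by
          refine lintegral_mono fun y => ?_
          rw [h5b y]; exact h5c y
      _ = ∫⁻ y in B, (∫⁻ w, S w y * Q (w - y)) * N := by
          refine lintegral_congr fun y => ?_
          exact lintegral_mul_const' N _ hNne
      _ = ∫⁻ y in B, (∫⁻ w in B', S w y * Q (w - y)) * N := by
          refine setLIntegral_congr_fun measurableSet_ball ?_
          intro y hy; dsimp only; rw [hrestr2 y hy]
      _ ≤ ∫⁻ y in B', (∫⁻ w in B', S w y * Q (w - y)) * N := lintegral_mono_set hBB'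
      _ = (∫⁻ y in B', ∫⁻ w in B', S w y * Q (w - y)) * N := lintegral_mul_const' N _ hNne
      _ = (∫⁻ w in B', ∫⁻ y in B', S w y * Q (w - y)) * N := by rw [hswapE]
      _ = E * N := by rw [hEdef]
  -- assemble
  have hRHS : ENNReal.ofReal (4 * ∫ z : Xd d, q z) * energyT d B' q u = 4 * (E * N) := by
    rw [hE, ENNReal.ofReal_mul (by norm_num : (0:ℝ) ≤ 4), hNval]
    rw [show ((ENNReal.ofReal 4) : ℝ≥0∞) = 4 from by norm_num]
    ring
  rw [hRHS]
  calc energyT d B (fun x => ∫ z : Xd d, q (x - z) * q z) u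
      ≤ ∫⁻ x in B, ∫⁻ y in B, ∫⁻ w, S x y * (Q (x - w) * Q (w - y)) := step1
    _ ≤ ∫⁻ x in B, ∫⁻ y in B, ∫⁻ w, (2 * S x w + 2 * S w y) * (Q (x - w) * Q (w - y)) := step2
    _ = 2 * A + 2 * Bt := step3
    _ ≤ 2 * (E * N) + 2 * (E * N) := by
        exact add_le_add (mul_le_mul_right step4 2) (mul_le_mul_right step5 2)
    _ = 4 * (E * N) := by ring


set_option maxHeartbeats 1000000 in
/-- Lemma 3 of the paper: for nonnegative `q ∈ L¹` supported in `B_ρ`,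
`E^{q∗q}_{B_R}(u,u) ≤ 4 ‖q‖₁ E^q_{B_{R+ρ}}(u,u)`. -/
theorem convolution_energy_bound (d : ℕ) (hd : 1 ≤ d) (ρ : ℝ) (hρ : 0 < ρ)
    (q : Xd d → ℝ) (hq : Integrable q (volume : Measure (Xd d)))
    (hqnonneg : ∀ x, 0 ≤ q x) (hqsupp : Function.support q ⊆ ball (0 : Xd d) ρ) :
    ∀ R : ℝ, 0 < R → ∀ u : Xd d → ℝ, Measurable u →
      energyT d (ball (0 : Xd d) R) (fun x => ∫ z : Xd d, q (x - z) * q z) u ≤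
        ENNReal.ofReal (4 * ∫ z : Xd d, q z) * energyT d (ball (0 : Xd d) (R + ρ)) q u := by
  intro R hR u hu
  -- measurable representative
  set g : Xd d → ℝ := hq.aemeasurable.mk q with hgdef
  have hgm : Measurable g := hq.aemeasurable.measurable_mk
  have hgq : q =ᵐ[volume] g := hq.aemeasurable.ae_eq_mk
  set q₀ : Xd d → ℝ := (ball (0 : Xd d) ρ).indicator (fun t => max (g t) 0) with hq₀def
  have hq₀m : Measurable q₀ := (hgm.max measurable_const).indicator measurableSet_ball
  have hq₀nonneg : ∀ x, 0 ≤ q₀ x := fun x =>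
    Set.indicator_nonneg (fun t _ => le_max_right _ _) x
  have hq₀supp : Function.support q₀ ⊆ ball (0 : Xd d) ρ := Set.support_indicator_subset
  have hqq₀ : q =ᵐ[volume] q₀ := by
    filter_upwards [hgq] with x hx
    by_cases hmem : x ∈ ball (0 : Xd d) ρ
    · rw [hq₀def, Set.indicator_of_mem hmem, ← hx, max_eq_left (hqnonneg x)]
    · have hx0 : q x = 0 := by
        by_contra h
        exact hmem (hqsupp h)
      rw [hq₀def, Set.indicator_of_notMem hmem, hx0]
  have hq₀int : Integrable q₀ (volume : Measure (Xd d)) := hq.congr hqq₀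
  -- the three transfers
  have hmul : ∀ x : Xd d, (fun z : Xd d => q (x - z) * q z) =ᵐ[volume]
      fun z => q₀ (x - z) * q₀ z := fun x =>
    ((MeasureTheory.quasiMeasurePreserving_sub_left volume x).ae_eq hqq₀).mul hqq₀
  have hconv : (fun x : Xd d => ∫ z : Xd d, q (x - z) * q z) =
      fun x => ∫ z : Xd d, q₀ (x - z) * q₀ z :=
    funext fun x => integral_congr_ae (hmul x)
  have hint : (∫ z : Xd d, q z) = ∫ z : Xd d, q₀ z := integral_congr_ae hqq₀
  have hen : energyT d (ball (0 : Xd d) (R + ρ)) q u =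
      energyT d (ball (0 : Xd d) (R + ρ)) q₀ u := by
    unfold energyT
    refine lintegral_congr fun x => lintegral_congr_ae ?_
    refine ae_restrict_of_ae ?_
    filter_upwards [(MeasureTheory.quasiMeasurePreserving_sub_left volume x).ae_eq hqq₀] with y hy
    rw [show q (x - y) = q₀ (x - y) from hy]
  rw [hconv, hint, hen]
  exact conv_bound_meas d ρ hρ q₀ hq₀int hq₀m hq₀nonneg hq₀supp R hR u hu
end
end

section
/- Let b ∈ (0,1), α ∈ (0,2), β = α − 1 + 1/b, and let Γ = {(x₁,x₂) ∈ ℝ² : |x₂| ≥ |x₁|^b or |x₁| ≥ |x₂|^b}. Define k(z) = (2−α) · 1_{Γ ∩ B₁}(z) · |z|^{−2−β} for z ∈ ℝ². Then for every r ∈ (0,1), ∫_{B_r} |z|² k(z) dz ≤ 8 r^{2−α}; in particular k satisfies condition (U1) in dimension d = 2 with constant C₁ = 8. -/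
open MeasureTheory Metric Set Filter
open scoped ENNReal RealInnerProductSpace SchwartzMap

noncomputable section

/-- The "thorn" region `Γ = {(x₁,x₂) : |x₂| ≥ |x₁|^b or |x₁| ≥ |x₂|^b}` in `ℝ²`. -/
def thornRegion (b : ℝ) : Set (Xd 2) :=
  {z : Xd 2 | |z 1| ≥ |z 0| ^ b ∨ |z 0| ≥ |z 1| ^ b}

/-- The thorn kernel `k(z) = (2-α) 1_{Γ ∩ B₁}(z) |z|^{-2-β}` with `β = α - 1 + 1/b`. -/
noncomputable def thornKernel (b α : ℝ) : Xd 2 → ℝ := fun z =>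
  (2 - α) *
    Set.indicator (thornRegion b ∩ ball (0 : Xd 2) 1)
      (fun w => ‖w‖ ^ (-2 - (α - 1 + 1/b))) z

lemma lint_Ioo_symm (r : ℝ) (hr : 0 < r) (ψ : ℝ → ℝ≥0∞) (hsymm : ∀ x, ψ (-x) = ψ x) :
    ∫⁻ x in Ioo (-r) r, ψ x = 2 * ∫⁻ x in Ioo 0 r, ψ x := by
  rw [← Set.Ioo_union_Ico_eq_Ioo (neg_lt_zero.mpr hr) hr.le,
    lintegral_union measurableSet_Ico
      (by rw [Set.disjoint_left]; rintro x ⟨-, hx0⟩ ⟨hx0', -⟩; linarith)]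
  have h1 : ∫⁻ x in Ico (0:ℝ) r, ψ x = ∫⁻ x in Ioo (0:ℝ) r, ψ x :=
    setLIntegral_congr Ioo_ae_eq_Ico.symm
  have h2 : ∫⁻ x in Ioo (-r) (0:ℝ), ψ x = ∫⁻ x in Ioo (0:ℝ) r, ψ x := by
    have := (Measure.measurePreserving_neg (volume : Measure ℝ)).setLIntegral_comp_emb
      (Homeomorph.neg ℝ).measurableEmbedding ψ (Ioo 0 r)
    simp only [hsymm, Set.image_neg_Ioo, neg_zero] at this
    exact this.symm
  rw [h1, h2, two_mul]

lemma lint_Ioo_rpow (r C p : ℝ) (hr : 0 < r) (hp : -1 < p) (hC : 0 ≤ C) :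
    ∫⁻ x in Ioo (0:ℝ) r, ENNReal.ofReal (C * x ^ p)
      = ENNReal.ofReal (C * (r ^ (p+1) / (p+1))) := by
  have hint : IntegrableOn (fun x : ℝ => C * x ^ p) (Ioo 0 r) :=
    (((intervalIntegral.intervalIntegrable_rpow' hp (a := 0) (b := r)).1).mono_set
      Set.Ioo_subset_Ioc_self).const_mul C
  rw [← ofReal_integral_eq_lintegral_ofReal hint ?_]
  · congr 1
    rw [MeasureTheory.integral_const_mul, ← MeasureTheory.integral_Ioc_eq_integral_Ioo,
      ← intervalIntegral.integral_of_le hr.le, integral_rpow (Or.inl hp),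
      Real.zero_rpow (by linarith), sub_zero]
  · filter_upwards [ae_restrict_mem measurableSet_Ioo] with x hx
    have : (0:ℝ) ≤ x ^ p := Real.rpow_nonneg hx.1.le p
    positivity

lemma coord_abs_le_norm (z : Xd 2) (i : Fin 2) : |z i| ≤ ‖z‖ := by
  rw [EuclideanSpace.norm_eq]
  calc |z i| = Real.sqrt (‖z i‖ ^ 2) := by
        rw [Real.norm_eq_abs, Real.sqrt_sq_eq_abs, abs_abs]
    _ ≤ Real.sqrt (∑ j, ‖z j‖ ^ 2) :=
        Real.sqrt_le_sqrt (Finset.single_le_sum (f := fun j => ‖z j‖ ^ 2)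
          (fun j _ => sq_nonneg _) (Finset.mem_univ i))

/-- Example 1 of the paper, estimate (U1): for the thorn kernel,
`∫_{B_r} |z|² k(z) dz ≤ 8 r^{2-α}` for every `r ∈ (0,1)`, i.e. (U1) holds with `C₁ = 8`. -/
theorem thorn_kernel_U1 (b α : ℝ) (hb : 0 < b) (hb1 : b < 1) (hα : 0 < α) (hα2 : α < 2) :
    ∀ r : ℝ, 0 < r → r < 1 →
      (∫⁻ z in ball (0 : Xd 2) r, ENNReal.ofReal (‖z‖ ^ 2 * thornKernel b α z)) ≤
        ENNReal.ofReal (8 * r ^ (2 - α)) := by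
  intro r hr0 hr1
  have hb' : (1:ℝ) < 1/b := one_lt_one_div hb hb1
  set β : ℝ := α - 1 + 1/b with hβ
  have hβpos : 0 < β := by rw [hβ]; linarith
  have h2α : (0:ℝ) < 2 - α := by linarith
  set S : Set (ℝ × ℝ) := {q : ℝ × ℝ | |q.1| < r ∧ |q.2| ≤ |q.1| ^ (1/b)} with hSdef
  set H : ℝ × ℝ → ℝ≥0∞ :=
    Set.indicator S (fun q => ENNReal.ofReal ((2 - α) * |q.1| ^ (-β))) with hHdef
  have hSm : MeasurableSet S := by
    have : S = {q : ℝ × ℝ | |q.1| < r} ∩ {q : ℝ × ℝ | |q.2| ≤ |q.1| ^ (1/b)} := rfl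
    rw [this]
    exact (measurableSet_lt measurable_fst.abs measurable_const).inter
      (measurableSet_le measurable_snd.abs (measurable_fst.abs.pow measurable_const))
  have hHm : Measurable H :=
    Measurable.indicator
      ((measurable_const.mul (measurable_fst.abs.pow measurable_const)).ennreal_ofReal) hSm
  have measZ : ∀ i : Fin 2, Measurable fun z : Xd 2 => z i := fun i =>
    (EuclideanSpace.proj i : EuclideanSpace ℝ (Fin 2) →L[ℝ] ℝ).continuous.measurable
  -- pointwise bound
  have hpt : ∀ z ∈ ball (0 : Xd 2) r,
      ENNReal.ofReal (‖z‖ ^ 2 * thornKernel b α z) ≤ H (z 0, z 1) + H (z 1, z 0) := by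
    intro z hz
    rw [mem_ball_zero_iff] at hz
    by_cases hΓ : z ∈ thornRegion b ∩ ball (0 : Xd 2) 1
    · by_cases hz0 : ‖z‖ = 0
      · simp [thornKernel, hz0]
      have hzn : 0 < ‖z‖ := lt_of_le_of_ne (norm_nonneg z) (Ne.symm hz0)
      have hkey : ‖z‖ ^ 2 * thornKernel b α z = (2 - α) * ‖z‖ ^ (-β) := by
        simp only [thornKernel, Set.indicator_of_mem hΓ]
        rw [show ‖z‖ ^ 2 * ((2 - α) * ‖z‖ ^ (-2 - (α - 1 + 1/b)))
            = (2 - α) * (‖z‖ ^ ((2:ℕ):ℝ) * ‖z‖ ^ (-2 - (α - 1 + 1/b))) by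
          rw [Real.rpow_natCast]; ring]
        rw [← Real.rpow_add hzn]
        congr 1
        rw [hβ]; push_cast; ring
      rw [hkey]
      rcases hΓ.1 with hcase | hcase
      · -- |z 1| ≥ |z 0| ^ b
        have h1pos : 0 < |z 1| := by
          rcases (abs_nonneg (z 1)).lt_or_eq with h | h
          · exact h
          · exfalso
            have h0 : |z 0| = 0 := by
              by_contra h0
              have : 0 < |z 0| ^ b :=
                Real.rpow_pos_of_pos (lt_of_le_of_ne (abs_nonneg _) (Ne.symm h0)) b
              rw [← h] at hcase
              linarith
            apply hz0
            rw [EuclideanSpace.norm_eq, Fin.sum_univ_two]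
            simp [Real.norm_eq_abs, h0, h.symm]
        have hle : |z 0| ≤ |z 1| ^ (1/b) := by
          have h := Real.rpow_le_rpow (Real.rpow_nonneg (abs_nonneg _) b) hcase
            (by positivity : (0:ℝ) ≤ 1/b)
          rwa [← Real.rpow_mul (abs_nonneg _), mul_one_div_cancel hb.ne', Real.rpow_one] at h
        have hmem : ((z 1, z 0) : ℝ × ℝ) ∈ S :=
          ⟨lt_of_le_of_lt (coord_abs_le_norm z 1) hz, hle⟩
        calc ENNReal.ofReal ((2 - α) * ‖z‖ ^ (-β))
            ≤ ENNReal.ofReal ((2 - α) * |z 1| ^ (-β)) :=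
              ENNReal.ofReal_le_ofReal (mul_le_mul_of_nonneg_left
                (Real.rpow_le_rpow_of_nonpos h1pos (coord_abs_le_norm z 1)
                  (neg_nonpos.mpr hβpos.le)) h2α.le)
          _ = H (z 1, z 0) := by rw [hHdef, Set.indicator_of_mem hmem]
          _ ≤ H (z 0, z 1) + H (z 1, z 0) := le_add_self
      · -- |z 0| ≥ |z 1| ^ b
        have h1pos : 0 < |z 0| := by
          rcases (abs_nonneg (z 0)).lt_or_eq with h | h
          · exact h
          · exfalso
            have h0 : |z 1| = 0 := by
              by_contra h0
              have : 0 < |z 1| ^ b :=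
                Real.rpow_pos_of_pos (lt_of_le_of_ne (abs_nonneg _) (Ne.symm h0)) b
              rw [← h] at hcase
              linarith
            apply hz0
            rw [EuclideanSpace.norm_eq, Fin.sum_univ_two]
            simp [Real.norm_eq_abs, h0, h.symm]
        have hle : |z 1| ≤ |z 0| ^ (1/b) := by
          have h := Real.rpow_le_rpow (Real.rpow_nonneg (abs_nonneg _) b) hcase
            (by positivity : (0:ℝ) ≤ 1/b)
          rwa [← Real.rpow_mul (abs_nonneg _), mul_one_div_cancel hb.ne', Real.rpow_one] at h
        have hmem : ((z 0, z 1) : ℝ × ℝ) ∈ S :=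
          ⟨lt_of_le_of_lt (coord_abs_le_norm z 0) hz, hle⟩
        calc ENNReal.ofReal ((2 - α) * ‖z‖ ^ (-β))
            ≤ ENNReal.ofReal ((2 - α) * |z 0| ^ (-β)) :=
              ENNReal.ofReal_le_ofReal (mul_le_mul_of_nonneg_left
                (Real.rpow_le_rpow_of_nonpos h1pos (coord_abs_le_norm z 0)
                  (neg_nonpos.mpr hβpos.le)) h2α.le)
          _ = H (z 0, z 1) := by rw [hHdef, Set.indicator_of_mem hmem]
          _ ≤ H (z 0, z 1) + H (z 1, z 0) := le_self_add
    · have : thornKernel b α z = 0 := by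
        simp [thornKernel, Set.indicator_of_notMem hΓ]
      simp [this]
  -- the main 2d computation
  have hswap : (∫⁻ p : ℝ × ℝ, H (p.2, p.1)) = ∫⁻ p : ℝ × ℝ, H p := by
    rw [Measure.volume_eq_prod]
    exact Measure.measurePreserving_swap.lintegral_comp hHm
  have hJ : (∫⁻ p : ℝ × ℝ, H p) = ENNReal.ofReal (4 * r ^ (2 - α)) := by
    rw [Measure.volume_eq_prod, lintegral_prod _ hHm.aemeasurable]
    have inner : ∀ x : ℝ, (∫⁻ y : ℝ, H (x, y)) =
        Set.indicator (Ioo (-r) r)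
          (fun x => ENNReal.ofReal ((2 - α) * |x| ^ (-β)) * ENNReal.ofReal (2 * |x| ^ (1/b))) x := by
      intro x
      by_cases hx : |x| < r
      · have hfun : (fun y => H (x, y)) =
            Set.indicator (Icc (-(|x| ^ (1/b))) (|x| ^ (1/b)))
              (fun _ => ENNReal.ofReal ((2 - α) * |x| ^ (-β))) := by
          funext y
          by_cases hy : |y| ≤ |x| ^ (1/b)
          · have hmemS : ((x, y) : ℝ × ℝ) ∈ S := ⟨hx, hy⟩
            have hmemI : y ∈ Icc (-(|x| ^ (1/b))) (|x| ^ (1/b)) := by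
              rw [mem_Icc, ← abs_le]; exact hy
            rw [hHdef, Set.indicator_of_mem hmemS, Set.indicator_of_mem hmemI]
          · have hmemS : ((x, y) : ℝ × ℝ) ∉ S := fun hmem => hy hmem.2
            have hmemI : y ∉ Icc (-(|x| ^ (1/b))) (|x| ^ (1/b)) := by
              rw [mem_Icc, ← abs_le]; exact hy
            rw [hHdef, Set.indicator_of_notMem hmemS, Set.indicator_of_notMem hmemI]
        rw [hfun, lintegral_indicator measurableSet_Icc, setLIntegral_const, Real.volume_Icc,
          Set.indicator_of_mem (by rw [mem_Ioo, ← abs_lt]; exact hx)]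
        congr 1
        rw [show |x| ^ (1/b) - -(|x| ^ (1/b)) = 2 * |x| ^ (1/b) by ring]
      · have h0 : ∀ y : ℝ, H (x, y) = 0 := fun y =>
          Set.indicator_of_notMem (fun hmem => hx hmem.1) _
        rw [Set.indicator_of_notMem (fun hmem => hx (by rw [abs_lt]; exact hmem))]
        simp [h0]
    simp_rw [inner]
    rw [lintegral_indicator measurableSet_Ioo,
      lint_Ioo_symm r hr0 _ (fun x => by rw [abs_neg]),
      setLIntegral_congr_fun measurableSet_Ioo
        ((fun x (hx : x ∈ Ioo (0:ℝ) r) => by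
          rw [abs_of_pos hx.1, ← ENNReal.ofReal_mul (mul_nonneg h2α.le (Real.rpow_nonneg hx.1.le _)),
            show (2 - α) * x ^ (-β) * (2 * x ^ (1/b)) = (2 * (2 - α)) * (x ^ (-β) * x ^ (1/b)) by ring,
            ← Real.rpow_add hx.1,
            show -β + 1/b = 1 - α by rw [hβ]; ring])),
      lint_Ioo_rpow r (2 * (2 - α)) (1 - α) hr0 (by linarith) (by linarith)]
    rw [show (1 - α) + 1 = 2 - α by ring,
      show 2 * (2 - α) * (r ^ (2 - α) / (2 - α)) = 2 * r ^ (2 - α) by field_simp]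
    rw [show (2 : ℝ≥0∞) = ENNReal.ofReal 2 by norm_num, ← ENNReal.ofReal_mul (by norm_num)]
    congr 1
    ring
  have transfer1 : (∫⁻ z : Xd 2, H (z 0, z 1)) = ∫⁻ p : ℝ × ℝ, H p :=
    ((MeasureTheory.volume_preserving_piFinTwo (fun _ : Fin 2 => ℝ)).comp
      (EuclideanSpace.volume_preserving_symm_measurableEquiv_toLp (Fin 2))).lintegral_comp hHm
  have transfer2 : (∫⁻ z : Xd 2, H (z 1, z 0)) = ∫⁻ p : ℝ × ℝ, H (p.2, p.1) :=
    ((MeasureTheory.volume_preserving_piFinTwo (fun _ : Fin 2 => ℝ)).comp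
      (EuclideanSpace.volume_preserving_symm_measurableEquiv_toLp (Fin 2))).lintegral_comp
      (hHm.comp (measurable_snd.prodMk measurable_fst))
  calc (∫⁻ z in ball (0 : Xd 2) r, ENNReal.ofReal (‖z‖ ^ 2 * thornKernel b α z))
      ≤ ∫⁻ z in ball (0 : Xd 2) r, (H (z 0, z 1) + H (z 1, z 0)) :=
        setLIntegral_mono
          ((hHm.comp ((measZ 0).prodMk (measZ 1))).add
            (hHm.comp ((measZ 1).prodMk (measZ 0)))) hpt
    _ = (∫⁻ z in ball (0 : Xd 2) r, H (z 0, z 1))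
          + ∫⁻ z in ball (0 : Xd 2) r, H (z 1, z 0) :=
        lintegral_add_left (hHm.comp ((measZ 0).prodMk (measZ 1))) _
    _ ≤ (∫⁻ z : Xd 2, H (z 0, z 1)) + ∫⁻ z : Xd 2, H (z 1, z 0) :=
        add_le_add (setLIntegral_le_lintegral _ _) (setLIntegral_le_lintegral _ _)
    _ = (∫⁻ p : ℝ × ℝ, H p) + ∫⁻ p : ℝ × ℝ, H (p.2, p.1) := by rw [transfer1, transfer2]
    _ = ENNReal.ofReal (4 * r ^ (2 - α)) + ENNReal.ofReal (4 * r ^ (2 - α)) := by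
        rw [hswap, hJ]
    _ = ENNReal.ofReal (8 * r ^ (2 - α)) := by
        rw [← ENNReal.ofReal_add (by positivity) (by positivity)]
        congr 1
        ring
end
end

section
/- Let d ≥ 1, 0 < α₀ < α < 2, and let L : ℝ^d → [0,∞) be a measurable even function satisfying condition (L1) with constants a > 1, C₂, C₃ > 0. Then there exists c₀ > 0, depending only on d, α₀, a, C₂ and C₃ (in particular independent of α ∈ (α₀,2)), such that for every h in the unit sphere S^{d−1} and every 0 < r < 1, ∫_{ℝ^d} r² sin²(h·z / r) L(z) dz ≥ c₀ r^{2−α}. -/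
open MeasureTheory Metric Set Filter
open scoped ENNReal RealInnerProductSpace SchwartzMap

noncomputable section

/-- For `|t| ≤ 1` we have `sin² t ≥ (9/16) t²`. -/
lemma sin_sq_lower {t : ℝ} (ht : |t| ≤ 1) : 9/16 * t^2 ≤ Real.sin t ^ 2 := by
  have key : ∀ s : ℝ, 0 ≤ s → s ≤ 1 → 9/16 * s^2 ≤ Real.sin s ^ 2 := by
    intro s hs hs1
    rcases eq_or_lt_of_le hs with hs0 | hs0
    · simp [← hs0]
    have hcube : s^3 ≤ s := by
      nlinarith [mul_nonneg (mul_nonneg hs (sub_nonneg.2 hs1)) (by linarith : (0:ℝ) ≤ 1 + s)]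
    have h1 : 3/4 * s ≤ Real.sin s := by
      nlinarith [Real.sin_gt_sub_cube hs0]
    calc 9/16 * s^2 = (3/4 * s)^2 := by ring
    _ ≤ Real.sin s ^ 2 := pow_le_pow_left₀ (by positivity) h1 2
  have h2 : Real.sin |t| ^ 2 = Real.sin t ^ 2 := by
    rcases abs_cases t with ⟨he, _⟩ | ⟨he, _⟩ <;> rw [he]
    rw [Real.sin_neg, neg_sq]
  calc 9/16 * t^2 = 9/16 * |t|^2 := by rw [sq_abs]
  _ ≤ Real.sin |t| ^ 2 := key |t| (abs_nonneg t) ht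
  _ = Real.sin t ^ 2 := h2
set_option maxHeartbeats 2000000 in
/-- (L1) implies condition (A2/as) of the appendix for `r₀ = 1`:
`∫ r² sin²(h·z/r) L(z) dz ≥ c₀ r^{2-α}` for all unit `h` and `0 < r < 1`, with `c₀`
depending only on `d, α₀, a, C₂, C₃`, uniformly in `α ∈ (α₀,2)`. -/
theorem L1_implies_sin_lower_bound (d : ℕ) (hd : 1 ≤ d) (α₀ a C₂ C₃ : ℝ)
    (hα₀ : 0 < α₀) (hα₀2 : α₀ < 2) (ha : 1 < a) (hC₂ : 0 < C₂) (hC₃ : 0 < C₃) :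
    ∃ c₀ : ℝ, 0 < c₀ ∧
      ∀ α : ℝ, α₀ < α → α < 2 →
        ∀ L : Xd d → ℝ, Measurable L → (∀ z, 0 ≤ L z) → (∀ᵐ z : Xd d, L (-z) = L z) →
          condL1 d α L a C₂ C₃ →
          ∀ h ∈ sphere (0 : Xd d) 1, ∀ r : ℝ, 0 < r → r < 1 →
            ENNReal.ofReal (c₀ * r ^ (2 - α)) ≤
              ∫⁻ z : Xd d, ENNReal.ofReal (r ^ 2 * Real.sin (⟪h, z⟫ / r) ^ 2 * L z) := by
  classical
  have ha0 : (0:ℝ) < a := lt_trans one_pos ha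
  set m' := (volume (ball (0:Xd d) 1 : Set (Xd d))).toReal with hm'def
  have hm'pos : 0 < m' :=
    ENNReal.toReal_pos (measure_ball_pos volume (0:Xd d) one_pos).ne' measure_ball_lt_top.ne
  clear_value m'
  refine ⟨9/64 * C₂^2 * C₃ * m' * (C₂/4)^d * a ^ (-(d:ℝ)-7), by positivity, ?_⟩
  intro α hαl hα2 L hLm hL0 _ hL1 h hh r hr0 hr1
  have hβ : (0:ℝ) < 2 - α := by linarith
  have hnorm : ‖h‖ = 1 := mem_sphere_zero_iff_norm.mp hh
  set A := 9/64 * C₂^2 * C₃ * m' * (C₂/4)^d with hAdef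
  have hA : 0 < A := by rw [hAdef]; positivity
  clear_value A
  -- choice of N
  have hex : ∃ n : ℕ, a ^ (-(n:ℝ)+1) ≤ r := by
    obtain ⟨n, hn⟩ := pow_unbounded_of_one_lt (a / r) ha
    have hapow : (0:ℝ) < a ^ n := pow_pos ha0 n
    have h1 : r⁻¹ ≤ a ^ n := by
      refine le_trans ?_ hn.le
      rw [div_eq_mul_inv]
      nlinarith [inv_pos.mpr hr0]
    have h2 : (a ^ n)⁻¹ ≤ r := (inv_le_comm₀ hapow hr0).mpr h1
    refine ⟨n + 1, ?_⟩
    have he : a ^ (-(↑(n+1):ℝ)+1) = (a ^ n)⁻¹ := by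
      rw [show (-(↑(n+1):ℝ)+1) = -(n:ℝ) by push_cast; ring, Real.rpow_neg ha0.le,
        Real.rpow_natCast]
    rw [he]; exact h2
  set N := Nat.find hex with hNdef
  have hN1 : a ^ (-(N:ℝ)+1) ≤ r := Nat.find_spec hex
  have hNne : N ≠ 0 := by
    intro h0
    have h1 := hN1
    rw [h0] at h1
    norm_num at h1
    linarith
  obtain ⟨N', hN'⟩ := Nat.exists_eq_succ_of_ne_zero hNne
  have hN2 : r < a ^ (-(N:ℝ)+2) := by
    have h3 : ¬ a ^ (-(N':ℝ)+1) ≤ r := Nat.find_min hex (by omega)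
    have hexp : (-(N':ℝ)+1) = (-(N:ℝ)+2) := by rw [hN']; push_cast; ring
    rw [hexp] at h3
    linarith [not_le.mp h3]
  clear_value N
  -- choice of K
  set K := ⌈(2-α)⁻¹⌉₊ with hKdef
  have hKge : (2-α)⁻¹ ≤ (K:ℝ) := Nat.le_ceil _
  have hKlt : (K:ℝ) < (2-α)⁻¹ + 1 := Nat.ceil_lt_add_one (by positivity)
  have hKβge : 1 ≤ (K:ℝ) * (2-α) := by
    have := mul_le_mul_of_nonneg_right hKge hβ.le
    rwa [inv_mul_cancel₀ hβ.ne'] at this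
  have hKβlt : (K:ℝ) * (2-α) < 3 := by
    have h5 := mul_lt_mul_of_pos_right hKlt hβ
    rw [add_mul, inv_mul_cancel₀ hβ.ne', one_mul] at h5
    linarith
  clear_value K
  -- the balls from (L1)
  choose x hxsub hxL using hL1
  set ρ : ℕ → ℝ := fun n => C₂ * a ^ (-(n:ℝ)) with hρ
  have hρpos : ∀ n, 0 < ρ n := fun n => mul_pos hC₂ (Real.rpow_pos_of_pos ha0 _)
  clear_value ρ
  have hxsub' : ∀ n, ball (x n) (ρ n) ⊆
      ball (0:Xd d) (a ^ (-(n:ℝ)+1)) \ ball (0:Xd d) (a ^ (-(n:ℝ))) := by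
    intro n; simp only [hρ]; exact hxsub n
  have hxL' : ∀ n, ∀ z ∈ ball (x n) (ρ n), C₃ * (2-α) * ‖z‖ ^ (-(d:ℝ)-α) ≤ L z := by
    intro n; simp only [hρ]; exact hxL n
  set ctr : ℕ → Xd d :=
    fun n => x n + ((if 0 ≤ ⟪h, x n⟫ then (1:ℝ) else -1) * (3 * ρ n / 4)) • h with hctr
  set B : ℕ → Set (Xd d) := fun n => ball (ctr n) (ρ n / 4) with hB
  clear_value ctr B
  have hBsub : ∀ n, B n ⊆ ball (x n) (ρ n) := by
    intro n z hz
    simp only [hB, mem_ball] at hz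
    rw [mem_ball]
    have hdc : dist (ctr n) (x n) = 3 * ρ n / 4 := by
      simp only [hctr]
      rw [dist_eq_norm, add_sub_cancel_left, norm_smul, Real.norm_eq_abs, hnorm, mul_one,
        abs_mul, abs_of_nonneg (by linarith [hρpos n] : (0:ℝ) ≤ 3 * ρ n / 4)]
      split_ifs <;> norm_num
    have htri := dist_triangle z (ctr n) (x n)
    rw [hdc] at htri
    linarith [hρpos n]
  have hzann : ∀ n, ∀ z ∈ B n, a ^ (-(n:ℝ)) ≤ ‖z‖ ∧ ‖z‖ < a ^ (-(n:ℝ)+1) := by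
    intro n z hz
    have h1 := hxsub' n (hBsub n hz)
    rw [Set.mem_diff, mem_ball_zero_iff, mem_ball_zero_iff] at h1
    exact ⟨not_lt.mp h1.2, h1.1⟩
  have hinner : ∀ n, ∀ z ∈ B n, ρ n / 2 ≤ |⟪h, z⟫| := by
    intro n z hz
    simp only [hB, mem_ball] at hz
    have hz4 : ‖z - ctr n‖ < ρ n / 4 := by rwa [← dist_eq_norm]
    have harg : ctr n + (z - ctr n) = z := by abel
    have hsplit : ⟪h, z⟫ = ⟪h, ctr n⟫ + ⟪h, z - ctr n⟫ := by
      conv_lhs => rw [← harg]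
      rw [inner_add_right]
    have hctr' : ⟪h, ctr n⟫ =
        ⟪h, x n⟫ + (if 0 ≤ ⟪h, x n⟫ then (1:ℝ) else -1) * (3 * ρ n / 4) := by
      simp only [hctr]
      rw [inner_add_right, real_inner_smul_right, real_inner_self_eq_norm_sq, hnorm]
      norm_num
    have hip : ⟪h, z⟫ =
        ⟪h, x n⟫ + (if 0 ≤ ⟪h, x n⟫ then (1:ℝ) else -1) * (3 * ρ n / 4) + ⟪h, z - ctr n⟫ := by
      rw [hsplit, hctr']
    have hcs : |⟪h, z - ctr n⟫| ≤ ρ n / 4 := by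
      have h6 := abs_real_inner_le_norm h (z - ctr n)
      rw [hnorm, one_mul] at h6
      linarith
    have habs := abs_le.mp hcs
    rcases le_or_gt 0 ⟪h, x n⟫ with hcase | hcase
    · rw [if_pos hcase] at hip
      have h7 : ρ n / 2 ≤ ⟪h, z⟫ := by rw [hip]; linarith [habs.1]
      exact h7.trans (le_abs_self _)
    · rw [if_neg (not_le.mpr hcase)] at hip
      have h7 : ρ n / 2 ≤ -⟪h, z⟫ := by rw [hip]; linarith [habs.2]
      exact le_abs.mpr (Or.inr h7)
  have hBmeas : ∀ n : ℕ, MeasurableSet (B n) := by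
    intro n; simp only [hB]; exact measurableSet_ball
  -- pointwise lower bound on the integrand
  set Cv : ℕ → ℝ :=
    fun n => 9/16 * (ρ n / 2)^2 * (C₃ * (2-α) * (a ^ (-(n:ℝ)+1)) ^ (-(d:ℝ)-α)) with hCv
  have hCvnonneg : ∀ n, 0 ≤ Cv n := by
    intro n
    simp only [hCv]
    have := hρpos n
    have h8 : (0:ℝ) ≤ (a ^ (-(n:ℝ)+1)) ^ (-(d:ℝ)-α) :=
      Real.rpow_nonneg (Real.rpow_nonneg ha0.le _) _
    positivity
  clear_value Cv
  have hpoint : ∀ n : ℕ, a ^ (-(n:ℝ)+1) ≤ r → ∀ z ∈ B n,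
      Cv n ≤ r^2 * Real.sin (⟪h, z⟫ / r)^2 * L z := by
    intro n hle z hz
    obtain ⟨hz1, hz2⟩ := hzann n z hz
    have hzr : ‖z‖ ≤ r := le_trans hz2.le hle
    have hih : |⟪h, z⟫| ≤ r := by
      have h9 := abs_real_inner_le_norm h z
      rw [hnorm, one_mul] at h9
      linarith
    have ht1 : |⟪h, z⟫ / r| ≤ 1 := by
      rw [abs_div, abs_of_pos hr0, div_le_one hr0]; exact hih
    have hsin := sin_sq_lower ht1
    have hrearr : r^2 * (9/16 * (⟪h, z⟫ / r)^2) = 9/16 * ⟪h, z⟫^2 := by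
      field_simp
    have step1 : 9/16 * ⟪h, z⟫^2 ≤ r^2 * Real.sin (⟪h, z⟫ / r)^2 := by
      rw [← hrearr]
      exact mul_le_mul_of_nonneg_left hsin (sq_nonneg r)
    have step2 : (ρ n / 2)^2 ≤ ⟪h, z⟫^2 := by
      have h10 := pow_le_pow_left₀ (by linarith [hρpos n] : (0:ℝ) ≤ ρ n / 2) (hinner n z hz) 2
      rwa [sq_abs] at h10
    have hz0 : 0 < ‖z‖ := lt_of_lt_of_le (Real.rpow_pos_of_pos ha0 _) hz1
    have hrp : (a ^ (-(n:ℝ)+1)) ^ (-(d:ℝ)-α) ≤ ‖z‖ ^ (-(d:ℝ)-α) := by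
      refine Real.rpow_le_rpow_of_nonpos hz0 hz2.le ?_
      have : (0:ℝ) ≤ d := Nat.cast_nonneg d
      linarith
    have step3 : C₃ * (2-α) * (a ^ (-(n:ℝ)+1)) ^ (-(d:ℝ)-α) ≤ L z := by
      calc C₃ * (2-α) * (a ^ (-(n:ℝ)+1)) ^ (-(d:ℝ)-α)
          ≤ C₃ * (2-α) * ‖z‖ ^ (-(d:ℝ)-α) :=
            mul_le_mul_of_nonneg_left hrp (mul_nonneg hC₃.le hβ.le)
      _ ≤ L z := hxL' n z (hBsub n hz)
    have step1' : 9/16 * (ρ n / 2)^2 ≤ r^2 * Real.sin (⟪h, z⟫ / r)^2 :=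
      le_trans (mul_le_mul_of_nonneg_left step2 (by norm_num : (0:ℝ) ≤ 9/16)) step1
    simp only [hCv]
    calc 9/16 * (ρ n / 2)^2 * (C₃ * (2-α) * (a ^ (-(n:ℝ)+1)) ^ (-(d:ℝ)-α))
        ≤ (r^2 * Real.sin (⟪h, z⟫ / r)^2) * L z := by
          refine mul_le_mul step1' step3 ?_ (by positivity)
          exact mul_nonneg (mul_nonneg hC₃.le hβ.le)
            (Real.rpow_nonneg (Real.rpow_nonneg ha0.le _) _)
    _ = r^2 * Real.sin (⟪h, z⟫ / r)^2 * L z := by ring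
  -- lower bound for the integral over each small ball
  have hball : ∀ n : ℕ, a ^ (-(n:ℝ)+1) ≤ r →
      ENNReal.ofReal (Cv n * ((ρ n / 4)^d * m')) ≤
        ∫⁻ z in B n, ENNReal.ofReal (r^2 * Real.sin (⟪h, z⟫ / r)^2 * L z) := by
    intro n hle
    have hvol : volume (B n) = ENNReal.ofReal ((ρ n / 4)^d) * ENNReal.ofReal m' := by
      simp only [hB]
      rw [Measure.addHaar_ball_of_pos volume _ (by linarith [hρpos n] : (0:ℝ) < ρ n / 4),
        finrank_euclideanSpace_fin, hm'def, ENNReal.ofReal_toReal measure_ball_lt_top.ne]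
    calc ENNReal.ofReal (Cv n * ((ρ n / 4)^d * m'))
        = ENNReal.ofReal (Cv n) * volume (B n) := by
          rw [ENNReal.ofReal_mul (hCvnonneg n),
            ENNReal.ofReal_mul (pow_nonneg (by linarith [hρpos n]) d), hvol]
    _ = ∫⁻ _ in B n, ENNReal.ofReal (Cv n) := (setLIntegral_const _ _).symm
    _ ≤ ∫⁻ z in B n, ENNReal.ofReal (r^2 * Real.sin (⟪h, z⟫ / r)^2 * L z) := by
        refine setLIntegral_mono' (hBmeas n) ?_
        intro z hz
        exact ENNReal.ofReal_le_ofReal (hpoint n hle z hz)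
  -- disjointness of the balls
  have hBdisj : ∀ m n : ℕ, m < n → Disjoint (B m) (B n) := by
    intro m n hmn
    rw [Set.disjoint_left]
    intro z hzm hzn
    have h1 := (hzann m z hzm).1
    have h2 := (hzann n z hzn).2
    have h3 : a ^ (-(n:ℝ)+1) ≤ a ^ (-(m:ℝ)) := by
      rw [Real.rpow_le_rpow_left_iff ha]
      have : (m:ℝ) + 1 ≤ (n:ℝ) := by exact_mod_cast hmn
      linarith
    linarith
  have hdisj : (↑(Finset.range K) : Set ℕ).PairwiseDisjoint (fun j => B (N + j)) := by
    intro i _ j _ hij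
    rcases lt_or_gt_of_ne hij with hl | hl
    · exact hBdisj _ _ (by omega)
    · exact (hBdisj _ _ (by omega)).symm
  have hle : ∀ j : ℕ, a ^ (-(↑(N + j):ℝ)+1) ≤ r := by
    intro j
    refine le_trans ?_ hN1
    apply Real.rpow_le_rpow_of_exponent_le ha.le
    push_cast
    linarith [Nat.cast_nonneg (α := ℝ) j]
  -- main chain of inequalities
  have hmain : ∑ j ∈ Finset.range K, ENNReal.ofReal (Cv (N+j) * ((ρ (N+j) / 4)^d * m')) ≤
      ∫⁻ z : Xd d, ENNReal.ofReal (r^2 * Real.sin (⟪h, z⟫ / r)^2 * L z) := by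
    calc ∑ j ∈ Finset.range K, ENNReal.ofReal (Cv (N+j) * ((ρ (N+j) / 4)^d * m'))
        ≤ ∑ j ∈ Finset.range K,
            ∫⁻ z in B (N+j), ENNReal.ofReal (r^2 * Real.sin (⟪h, z⟫ / r)^2 * L z) :=
          Finset.sum_le_sum (fun j _ => hball (N+j) (hle j))
    _ = ∫⁻ z in ⋃ j ∈ Finset.range K, B (N+j),
          ENNReal.ofReal (r^2 * Real.sin (⟪h, z⟫ / r)^2 * L z) :=
        (lintegral_biUnion_finset hdisj (fun j _ => hBmeas (N+j)) _).symm
    _ ≤ ∫⁻ z : Xd d, ENNReal.ofReal (r^2 * Real.sin (⟪h, z⟫ / r)^2 * L z) :=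
        setLIntegral_le_lintegral _ _
  -- the per-term identity
  have key : ∀ n : ℕ, (a ^ (-(n:ℝ)))^2 * (a ^ (-(n:ℝ)))^d * (a ^ (-(n:ℝ)+1)) ^ (-(d:ℝ)-α)
      = a ^ ((n:ℝ)*(α-2) - (d:ℝ) - α) := by
    intro n
    rw [← Real.rpow_natCast (a ^ (-(n:ℝ))) 2, ← Real.rpow_natCast (a ^ (-(n:ℝ))) d,
      ← Real.rpow_mul ha0.le, ← Real.rpow_mul ha0.le, ← Real.rpow_mul ha0.le,
      ← Real.rpow_add ha0, ← Real.rpow_add ha0]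
    congr 1
    push_cast
    ring
  have hT : ∀ n : ℕ, Cv n * ((ρ n / 4)^d * m') =
      A * (2-α) * a ^ ((n:ℝ)*(α-2) - (d:ℝ) - α) := by
    intro n
    simp only [hCv, hρ, hAdef]
    rw [show C₂ * a ^ (-(n:ℝ)) / 2 = (C₂/2) * a ^ (-(n:ℝ)) by ring,
      show C₂ * a ^ (-(n:ℝ)) / 4 = (C₂/4) * a ^ (-(n:ℝ)) by ring,
      mul_pow, mul_pow, ← key n]
    ring
  -- the real-valued sum bound
  set q : ℝ := ((N:ℝ) + (K:ℝ) - 1)*(α-2) - (d:ℝ) - 2 with hq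
  clear_value q
  have hterm : ∀ j ∈ Finset.range K,
      A * (2-α) * a ^ q ≤ Cv (N+j) * ((ρ (N+j) / 4)^d * m') := by
    intro j hj
    rw [hT (N+j)]
    have hj' : (j:ℝ) ≤ (K:ℝ) - 1 := by
      have h11 := Finset.mem_range.mp hj
      have h12 : (j:ℝ) + 1 ≤ (K:ℝ) := by exact_mod_cast h11
      linarith
    refine mul_le_mul_of_nonneg_left ?_ (mul_nonneg hA.le hβ.le)
    rw [Real.rpow_le_rpow_left_iff ha, hq]
    push_cast
    nlinarith [mul_nonneg (by linarith : (0:ℝ) ≤ (K:ℝ) - 1 - (j:ℝ)) hβ.le, hα2.le]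
  have hc2 : a ^ (-(d:ℝ)-7) * r ^ (2-α) ≤ (K:ℝ)*(2-α) * a ^ q := by
    have h1 : r ^ (2-α) ≤ a ^ ((-(N:ℝ)+2)*(2-α)) := by
      calc r ^ (2-α) ≤ (a ^ (-(N:ℝ)+2)) ^ (2-α) := Real.rpow_le_rpow hr0.le hN2.le hβ.le
      _ = a ^ ((-(N:ℝ)+2)*(2-α)) := by rw [← Real.rpow_mul ha0.le]
    calc a ^ (-(d:ℝ)-7) * r ^ (2-α)
        ≤ a ^ (-(d:ℝ)-7) * a ^ ((-(N:ℝ)+2)*(2-α)) :=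
          mul_le_mul_of_nonneg_left h1 (Real.rpow_nonneg ha0.le _)
    _ = a ^ (-(d:ℝ)-7 + (-(N:ℝ)+2)*(2-α)) := (Real.rpow_add ha0 _ _).symm
    _ ≤ a ^ q := by
        rw [Real.rpow_le_rpow_left_iff ha, hq]
        nlinarith [hKβlt, hα2.le]
    _ ≤ (K:ℝ)*(2-α) * a ^ q := le_mul_of_one_le_left (Real.rpow_nonneg ha0.le _) hKβge
  have hreal : A * a ^ (-(d:ℝ)-7) * r ^ (2-α) ≤
      ∑ j ∈ Finset.range K, Cv (N+j) * ((ρ (N+j) / 4)^d * m') := by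
    calc A * a ^ (-(d:ℝ)-7) * r ^ (2-α) = A * (a ^ (-(d:ℝ)-7) * r ^ (2-α)) := by ring
    _ ≤ A * ((K:ℝ)*(2-α) * a ^ q) := mul_le_mul_of_nonneg_left hc2 hA.le
    _ = (K:ℝ) * (A * (2-α) * a ^ q) := by ring
    _ = ∑ _j ∈ Finset.range K, A * (2-α) * a ^ q := by
        rw [Finset.sum_const, Finset.card_range, nsmul_eq_mul]
    _ ≤ ∑ j ∈ Finset.range K, Cv (N+j) * ((ρ (N+j) / 4)^d * m') :=
        Finset.sum_le_sum hterm
  have htermnonneg : ∀ j ∈ Finset.range K, 0 ≤ Cv (N+j) * ((ρ (N+j) / 4)^d * m') := by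
    intro j _
    exact mul_nonneg (hCvnonneg _)
      (mul_nonneg (pow_nonneg (by linarith [hρpos (N+j)]) d) hm'pos.le)
  calc ENNReal.ofReal (A * a ^ (-(d:ℝ)-7) * r ^ (2-α))
      ≤ ENNReal.ofReal (∑ j ∈ Finset.range K, Cv (N+j) * ((ρ (N+j) / 4)^d * m')) :=
        ENNReal.ofReal_le_ofReal hreal
  _ = ∑ j ∈ Finset.range K, ENNReal.ofReal (Cv (N+j) * ((ρ (N+j) / 4)^d * m')) :=
      ENNReal.ofReal_sum_of_nonneg htermnonneg
  _ ≤ _ := hmain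
end
end
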